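/- arXiv:2211.16134 — 8 statements merged into one kernel-verified Lean document; each statement's English description precedes it below -/
import Mathlib

section
/- Let k be a commutative noetherian ring, A a finitely generated commutative k-algebra, and G a finite group acting on A by k-algebra automorphisms. Then the subalgebra A^G of G-invariants is a finitely generated k-algebra. -/
/-!
Every `a ∈ A` is a root of the monic polynomial `∏_{g ∈ G} (X - g • a)`, whose coefficients are
invariant, so `A` is integral over `A^G`; being also of finite type, `A` is a finite `A^G`-module.
The Artin–Tate lemma then descends finite generation over the noetherian ring `k` from `A`
to `A^G`.
-/

/-- The subalgebra of `G`-invariants of a `k`-algebra `A`,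
where `G` acts on `A` by `k`-algebra automorphisms. -/
def invariantSubalgebra (k A G : Type*) [CommRing k] [CommRing A] [Algebra k A]
    [Group G] [MulSemiringAction G A] [SMulCommClass G k A] : Subalgebra k A where
  carrier := {a | ∀ g : G, g • a = a}
  mul_mem' := fun {a b} ha hb g => by rw [smul_mul', ha g, hb g]
  add_mem' := fun {a b} ha hb g => by rw [smul_add, ha g, hb g]
  algebraMap_mem' := fun r g => by
    rw [Algebra.algebraMap_eq_smul_one, smul_comm, smul_one]

instance invariantSubalgebra.isInvariant (k A G : Type*) [CommRing k] [CommRing A] [Algebra k A]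
    [Group G] [MulSemiringAction G A] [SMulCommClass G k A] :
    Algebra.IsInvariant (invariantSubalgebra k A G) A G :=
  ⟨fun a ha => ⟨⟨a, ha⟩, rfl⟩⟩

theorem Algebra.FiniteType.of_isIntegral_of_injective {R B C : Type*} [CommRing R]
    [IsNoetherianRing R] [CommRing B] [CommRing C] [Algebra R B] [Algebra R C] [Algebra B C]
    [IsScalarTower R B C] [Algebra.FiniteType R C] [Algebra.IsIntegral B C]
    (hBC : Function.Injective (algebraMap B C)) :
    Algebra.FiniteType R B :=
  have : Algebra.FiniteType B C := .of_restrictScalars_finiteType R B C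
  have : Module.Finite B C := Algebra.IsIntegral.finite
  ⟨fg_of_fg_of_fg R B C Algebra.FiniteType.out Module.Finite.fg_top hBC⟩

/-- **Noether's theorem on invariants.** If `k` is a commutative noetherian ring, `A` a
finitely generated commutative `k`-algebra and `G` a finite group acting on `A` by
`k`-algebra automorphisms, then the `k`-algebra `A^G` of invariants is finitely generated. -/
theorem invariants_finiteType (k A G : Type*) [CommRing k] [IsNoetherianRing k]
    [CommRing A] [Algebra k A] (hA : Algebra.FiniteType k A)
    [Group G] [Finite G] [MulSemiringAction G A] [SMulCommClass G k A] :
    Algebra.FiniteType k (invariantSubalgebra k A G) :=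
  have : Algebra.IsIntegral (invariantSubalgebra k A G) A :=
    Algebra.IsInvariant.isIntegral _ A G
  .of_isIntegral_of_injective Subtype.val_injective
end

section
/- Let k be a commutative noetherian ring, A a finitely generated commutative k-algebra with an action of a finite group G by k-algebra automorphisms, and V a finitely generated A-module with a k-linear G-action satisfying g•(a·v) = (g•a)·(g•v) for all g ∈ G, a ∈ A, v ∈ V. Then V^G is a finitely generated module over A^G. -/
/-!
`A` is integral over `A^G`, every `a` being a root of the monic `∏ g, (X - g • a)` with invariant
coefficients; being also of finite type, `A` is finite over `A^G`. By Artin–Tate, `A^G` is then of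
finite type over the noetherian ring `k`, hence noetherian. So `V`, finite over `A`, is a finite and
therefore noetherian `A^G`-module, and its `A^G`-submodule `V^G` is finitely generated.
-/

namespace FixedPoints

section Subalgebra

variable (k A G : Type*) [CommRing k] [CommRing A] [Algebra k A]
  [Group G] [MulSemiringAction G A] [SMulCommClass G k A]

instance isInvariant_subalgebra : Algebra.IsInvariant (subalgebra k A G) A G :=
  ⟨fun a ha => ⟨⟨a, ha⟩, rfl⟩⟩

variable [Finite G] [Algebra.FiniteType k A]

instance finite_subalgebra : Module.Finite (subalgebra k A G) A :=
  have : Algebra.IsIntegral (subalgebra k A G) A := Algebra.IsInvariant.isIntegral _ A G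
  have : Algebra.FiniteType (subalgebra k A G) A := .of_restrictScalars_finiteType k _ A
  Algebra.IsIntegral.finite

variable [IsNoetherianRing k]

instance finiteType_subalgebra : Algebra.FiniteType k (subalgebra k A G) :=
  ⟨fg_of_fg_of_fg k (subalgebra k A G) A Algebra.FiniteType.out Module.Finite.fg_top
    Subtype.val_injective⟩

instance isNoetherianRing_subalgebra : IsNoetherianRing (subalgebra k A G) :=
  Algebra.FiniteType.isNoetherianRing k _

end Subalgebra

section Submodule

variable (k A G V : Type*) [CommRing k] [CommRing A] [Algebra k A]
  [Group G] [MulSemiringAction G A] [SMulCommClass G k A]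
  [AddCommGroup V] [Module A V] [DistribMulAction G V]

def submodule (hcompat : ∀ (g : G) (a : A) (v : V), g • (a • v) = (g • a) • (g • v)) :
    Submodule (subalgebra k A G) V where
  toAddSubmonoid := addSubmonoid G V
  smul_mem' c v hv g := by
    change g • ((c : A) • v) = (c : A) • v
    rw [hcompat, c.2 g, hv g]

variable {k A G V} in
theorem mem_submodule {hcompat : ∀ (g : G) (a : A) (v : V), g • (a • v) = (g • a) • (g • v)}
    {v : V} : v ∈ submodule k A G V hcompat ↔ ∀ g : G, g • v = v :=
  Iff.rfl

theorem submodule_fg [IsNoetherianRing k] [Finite G] [Algebra.FiniteType k A] [Module.Finite A V]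
    (hcompat : ∀ (g : G) (a : A) (v : V), g • (a • v) = (g • a) • (g • v)) :
    (submodule k A G V hcompat).FG :=
  have : Module.Finite (subalgebra k A G) V := .trans A V
  IsNoetherian.noetherian _

end Submodule

end FixedPoints

theorem invariants_module_finite_general (k A G V : Type*) [CommRing k] [IsNoetherianRing k]
    [CommRing A] [Algebra k A] (hA : Algebra.FiniteType k A)
    [Group G] [Finite G] [MulSemiringAction G A] [SMulCommClass G k A]
    [AddCommGroup V] [Module A V] [DistribMulAction G V]
    (hV : Module.Finite A V)
    (hcompat : ∀ (g : G) (a : A) (v : V), g • (a • v) = (g • a) • (g • v)) :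
    ∃ s : Finset V, (∀ x ∈ s, ∀ g : G, g • x = x) ∧
      ∀ v : V, (∀ g : G, g • v = v) →
        ∃ c : V → A, (∀ x, ∀ g : G, g • c x = c x) ∧ v = ∑ x ∈ s, c x • x := by
  obtain ⟨s, hs⟩ := FixedPoints.submodule_fg k A G V hcompat
  refine ⟨s, fun x hx => FixedPoints.mem_submodule.mp (hs ▸ Submodule.subset_span hx),
    fun v hv => ?_⟩
  obtain ⟨c, -, hc⟩ := Submodule.mem_span_finset.mp (hs ▸ FixedPoints.mem_submodule.mpr hv)
  exact ⟨fun x => c x, fun x => (c x).2, hc.symm⟩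

/-- **Noether's theorem for invariants of modules.** Let `k` be a commutative noetherian ring,
`A` a finitely generated commutative `k`-algebra with an action of a finite group `G` by
`k`-algebra automorphisms, and `V` a finitely generated `A`-module with a `k`-linear `G`-action
which is semilinear over the action on `A` (`g • (a • v) = (g • a) • (g • v)`).  Then the
invariants `V^G` form a finitely generated module over the invariant algebra `A^G`:
there are finitely many invariant elements of `V` such that every invariant element of `V`
is a linear combination of them with invariant coefficients. -/
theorem invariants_module_finite (k A G V : Type*) [CommRing k] [IsNoetherianRing k]
    [CommRing A] [Algebra k A] (hA : Algebra.FiniteType k A)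
    [Group G] [Finite G] [MulSemiringAction G A] [SMulCommClass G k A]
    [AddCommGroup V] [Module k V] [Module A V] [IsScalarTower k A V]
    [DistribMulAction G V] [SMulCommClass G k V]
    (hV : Module.Finite A V)
    (hcompat : ∀ (g : G) (a : A) (v : V), g • (a • v) = (g • a) • (g • v)) :
    ∃ s : Finset V, (∀ x ∈ s, ∀ g : G, g • x = x) ∧
      ∀ v : V, (∀ g : G, g • v = v) →
        ∃ c : V → A, (∀ x, ∀ g : G, g • c x = c x) ∧ v = ∑ x ∈ s, c x • x :=
  invariants_module_finite_general k A G V hA hV hcompat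
end

section
/- Let K → L be a faithfully flat morphism of commutative rings and A a K-algebra. If the L-algebra A ⊗_K L is left noetherian, then A is left noetherian. -/
open TensorProduct

/-! For a left ideal `I` of `A`, the base change `L ⊗[K] I` is a left ideal of
`L ⊗[K] A ≃ A ⊗[K] L`, and faithful flatness of `L` makes `I ↦ L ⊗[K] I` reflect inclusions.
Hence the left ideals of `A` order-embed into those of `A ⊗[K] L`, and ascending chains descend. -/

theorem Submodule.map_baseChange_le_baseChange {R M : Type*} (A : Type*) [CommSemiring R]
    [Semiring A] [Algebra R A] [AddCommMonoid M] [Module R M] {p : Submodule R M} {f : M →ₗ[R] M}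
    (hf : ∀ m ∈ p, f m ∈ p) : (p.baseChange A).map (f.baseChange A) ≤ p.baseChange A := by
  rw [Submodule.baseChange, ← LinearMap.range_comp, ← LinearMap.baseChange_comp]
  change (LinearMap.baseChange A (p.subtype ∘ₗ f.restrict hf)).range ≤ _
  rw [LinearMap.baseChange_comp]
  exact LinearMap.range_comp_le_range _ _

theorem Algebra.TensorProduct.one_tmul_mul_eq_baseChange_mulLeft {R B A : Type*} [CommSemiring R]
    [CommSemiring B] [Algebra R B] [Semiring A] [Algebra R A] (a : A) (y : B ⊗[R] A) :
    (1 ⊗ₜ[R] a) * y = (LinearMap.mulLeft R a).baseChange B y := by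
  induction y using TensorProduct.induction_on with
  | zero => simp
  | tmul b c => simp
  | add y z hy hz => rw [mul_add, map_add, hy, hz]

namespace Ideal

variable (K : Type*) {A : Type*} (L : Type*) [CommRing K] [CommRing L] [Algebra K L] [Ring A]
  [Algebra K A]

def baseChange (I : Ideal A) : Ideal (L ⊗[K] A) where
  __ := (I.restrictScalars K).baseChange L
  smul_mem' x y hy := by
    change x * y ∈ (I.restrictScalars K).baseChange L
    induction x using TensorProduct.induction_on with
    | zero => simp
    | add x z hx hz => rw [add_mul]; exact add_mem hx hz
    | tmul l a =>
      have hmul : (l ⊗ₜ[K] a) * y = l • ((1 ⊗ₜ a) * y) := by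
        rw [← smul_mul_assoc, smul_tmul', smul_eq_mul, mul_one]
      rw [hmul, Algebra.TensorProduct.one_tmul_mul_eq_baseChange_mulLeft]
      exact Submodule.smul_mem _ l <|
        Submodule.map_baseChange_le_baseChange L (fun _ hm => I.mul_mem_left a hm) ⟨y, hy, rfl⟩

theorem coe_baseChange (I : Ideal A) :
    (I.baseChange K L : Set (L ⊗[K] A)) = (I.restrictScalars K).baseChange L := rfl

variable [Module.FaithfullyFlat K L]

def baseChangeOrderEmbedding : Ideal A ↪o Ideal (L ⊗[K] A) :=
  OrderEmbedding.ofMapLEIff (baseChange K L) fun I J => by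
    rw [← SetLike.coe_subset_coe, coe_baseChange, coe_baseChange, SetLike.coe_subset_coe,
      Submodule.baseChange_le_iff, Submodule.restrictScalars_le]

end Ideal

open TensorProduct in
/-- **Faithfully flat descent of noetherianity.** Let `K → L` be a faithfully flat morphism of
commutative rings and `A` a `K`-algebra.  If the `L`-algebra `A ⊗_K L` is left noetherian,
then `A` is left noetherian. -/
theorem isNoetherianRing_of_faithfullyFlat_baseChange
    (K L A : Type*) [CommRing K] [CommRing L] [Algebra K L] [Module.FaithfullyFlat K L]
    [Ring A] [Algebra K A] (h : IsNoetherianRing (A ⊗[K] L)) :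
    IsNoetherianRing A := by
  have hL : IsNoetherianRing (L ⊗[K] A) :=
    isNoetherianRing_of_ringEquiv _ (Algebra.TensorProduct.comm K A L).toRingEquiv
  rw [isNoetherianRing_iff, isNoetherian_iff'] at hL ⊢
  exact (Ideal.baseChangeOrderEmbedding K L).wellFoundedGT
end

section
/- Let k be a commutative ring of characteristic zero and p a prime number such that p becomes invertible in the quotient k/k_tor, where k_tor is the ℤ-torsion ideal of k, and such that p^i·(1 − p·x) = 0 for some x ∈ k and i ∈ ℕ. Then the element p^i·x^i is idempotent in k, and k is isomorphic to the product of k/(p^i x^i), a ring whose characteristic is a power of p, and k/(1 − p^i x^i), a ring in which p is invertible. -/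
/-- The ideal of `ℤ`-torsion elements of a commutative ring. -/
def torsionIdeal (k : Type*) [CommRing k] : Ideal k where
  carrier := {x | ∃ n : ℕ, 0 < n ∧ n • x = 0}
  add_mem' := fun {a b} ha hb => by
    obtain ⟨n, hn, ha⟩ := ha
    obtain ⟨m, hm, hb⟩ := hb
    exact ⟨n * m, Nat.mul_pos hn hm, by
      rw [mul_comm, mul_smul, smul_add, ha, zero_add, smul_comm, hb, smul_zero]⟩
  zero_mem' := ⟨1, one_pos, smul_zero 1⟩
  smul_mem' := fun c {x} hx => by
    obtain ⟨n, hn, hx⟩ := hx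
    exact ⟨n, hn, by rw [smul_eq_mul, mul_comm, ← smul_mul_assoc, hx, zero_mul]⟩

/-!
If `a ^ i * (1 - a * b) = 0`, i.e. `a ^ i = a ^ i * (a * b)`, iterating gives
`a ^ i = a ^ i * (a * b) ^ i = a ^ i * e` for `e = a ^ i * b ^ i`. Hence `e` is idempotent,
`a ^ i` lies in `(e)`, and modulo `1 - e`, where `e = 1`, the relation cancels to `a * b = 1`.
For `a = p` this kills `p ^ i` in `k/(e)` and inverts `p` in `k/(1 - e)`; the splitting of `k`
is the one attached to any idempotent.
-/

section PowMulSubEqZero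

variable {R : Type*} [CommRing R] {a b : R} {i : ℕ}

theorem pow_mul_mul_pow_eq_pow (h : a ^ i * (1 - a * b) = 0) (n : ℕ) :
    a ^ i * (a * b) ^ n = a ^ i := by
  induction n with
  | zero => simp
  | succ n ih => linear_combination (a * b) * ih - h

theorem isIdempotentElem_pow_mul_pow (h : a ^ i * (1 - a * b) = 0) :
    IsIdempotentElem (a ^ i * b ^ i) := by
  rw [IsIdempotentElem]
  linear_combination b ^ i * pow_mul_mul_pow_eq_pow h i

theorem pow_mem_span_pow_mul_pow (h : a ^ i * (1 - a * b) = 0) :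
    a ^ i ∈ Ideal.span {a ^ i * b ^ i} :=
  Ideal.mem_span_singleton'.mpr ⟨a ^ i, by linear_combination pow_mul_mul_pow_eq_pow h i⟩

theorem mul_eq_one_of_pow_mul_pow_eq_one (h : a ^ i * (1 - a * b) = 0)
    (h₁ : a ^ i * b ^ i = 1) : a * b = 1 := by
  linear_combination -(b ^ i) * h + (1 - a * b) * h₁

theorem isUnit_mk_span_one_sub_pow_mul_pow (h : a ^ i * (1 - a * b) = 0) :
    IsUnit (Ideal.Quotient.mk (Ideal.span {1 - a ^ i * b ^ i}) a) := by
  set π := Ideal.Quotient.mk (Ideal.span {1 - a ^ i * b ^ i})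
  have hπ₁ : π (a ^ i * b ^ i) = 1 :=
    (Ideal.Quotient.eq.mpr (Ideal.mem_span_singleton_self _)).symm.trans (map_one π)
  refine .of_mul_eq_one (π b) (mul_eq_one_of_pow_mul_pow_eq_one (i := i) ?_ ?_)
  · simpa using congrArg π h
  · simpa using hπ₁

end PowMulSubEqZero

theorem exists_charP_pow_of_natCast_pow_eq_zero {S : Type*} [Ring S] {p i : ℕ}
    (hp : p.Prime) (h : (p : S) ^ i = 0) : ∃ j : ℕ, CharP S (p ^ j) := by
  have hdvd : ringChar S ∣ p ^ i := ringChar.dvd (by exact_mod_cast h)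
  obtain ⟨j, -, hj⟩ := (Nat.dvd_prime_pow hp).mp hdvd
  exact ⟨j, hj ▸ ringChar.charP S⟩

theorem idempotent_decomposition_general (k : Type*) [CommRing k]
    (p : ℕ) (hp : p.Prime)
    (x : k) (i : ℕ) (hx : (p : k) ^ i * (1 - (p : k) * x) = 0) :
    IsIdempotentElem ((p : k) ^ i * x ^ i) ∧
      (∃ j : ℕ, CharP (k ⧸ Ideal.span {(p : k) ^ i * x ^ i}) (p ^ j)) ∧
      IsUnit ((p : k ⧸ Ideal.span {1 - (p : k) ^ i * x ^ i})) ∧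
      Nonempty (k ≃+* (k ⧸ Ideal.span {(p : k) ^ i * x ^ i}) ×
        (k ⧸ Ideal.span {1 - (p : k) ^ i * x ^ i})) := by
  have he := isIdempotentElem_pow_mul_pow hx
  have hpi : (p : k ⧸ Ideal.span {(p : k) ^ i * x ^ i}) ^ i = 0 := by
    simpa using Ideal.Quotient.eq_zero_iff_mem.mpr (pow_mem_span_pow_mul_pow hx)
  refine ⟨he, exists_charP_pow_of_natCast_pow_eq_zero hp hpi, ?_, ?_⟩
  · simpa using isUnit_mk_span_one_sub_pow_mul_pow hx
  · exact ⟨(AlgEquiv.prodQuotientOfIsIdempotentElem k he he.one_sub (add_sub_cancel _ _)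
      (by simp [mul_sub, he.eq])).toRingEquiv⟩

/-- Let `k` be a commutative ring of characteristic zero and `p` a prime which becomes
invertible in `k/k_tor` and such that `p^i·(1 − p·x) = 0` for some `x ∈ k`, `i ∈ ℕ`.
Then `e = p^i·x^i` is idempotent, and `k` is isomorphic to the product of `k/(e)`, whose
characteristic is a power of `p`, and `k/(1−e)`, in which `p` is invertible. -/
theorem idempotent_decomposition (k : Type*) [CommRing k] [CharZero k]
    (p : ℕ) (hp : p.Prime)
    (hinv : IsUnit ((p : k ⧸ torsionIdeal k)))
    (x : k) (i : ℕ) (hx : (p : k) ^ i * (1 - (p : k) * x) = 0) :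
    IsIdempotentElem ((p : k) ^ i * x ^ i) ∧
      (∃ j : ℕ, CharP (k ⧸ Ideal.span {(p : k) ^ i * x ^ i}) (p ^ j)) ∧
      IsUnit ((p : k ⧸ Ideal.span {1 - (p : k) ^ i * x ^ i})) ∧
      Nonempty (k ≃+* (k ⧸ Ideal.span {(p : k) ^ i * x ^ i}) ×
        (k ⧸ Ideal.span {1 - (p : k) ^ i * x ^ i})) :=
  idempotent_decomposition_general k p hp x i hx
end

section
/- Let R be a commutative ring, T ⊆ R a multiplicative subset, and d ∈ ℕ. Then T^[d] := {t^[d] | t ∈ T} is a multiplicative subset of the commutative ring Γ^d(R), and there is a ring isomorphism Γ^d(R[T⁻¹]) ≅ Γ^d(R)[(T^[d])⁻¹]. -/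
/-!
A ring map `A → B` induces a ring map `Γ^d(A) → Γ^d(B)`, and `t^[d] · (1/t)^[d] = 1^[d]` shows
that `T^[d]` becomes invertible in `Γ^d(R[T⁻¹])`, so we get a map
`Γ^d(R)[(T^[d])⁻¹] → Γ^d(R[T⁻¹])`. The key fact is that multiplication by `t^[d]` on `Γ^d` is
`Γ^d` of multiplication by `t`. Surjectivity: the denominators of the finitely many entries
of a generator `∏ zᵢ^[jᵢ]` are cleared by a single `t ∈ T`. Injectivity: `Γ*` commutes with the
filtered colimit `R[T⁻¹] = colim (R →(·t) R)`; concretely, after scaling by some `t ∈ T`, every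
relation of `Γ*(R[T⁻¹])` comes from a relation of `Γ*(R)`, and every pair of variables identified
by `R → R[T⁻¹]` is already identified in `R`.
-/

open MvPolynomial

/-- The ideal of relations defining the divided power algebra `Γ*_k(V)`:
`v^[0] = 1`, `(c•v)^[n] = cⁿ v^[n]`, `v^[n]·v^[m] = ((n+m)!/(n!m!)) v^[n+m]`,
`(v+w)^[n] = ∑_{i+j=n} v^[i] w^[j]`, where the variable `X (v, n)` stands for `v^[n]`. -/
noncomputable def dpRelations (k V : Type*) [CommRing k] [AddCommGroup V] [Module k V] :
    Ideal (MvPolynomial (V × ℕ) k) :=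
  Ideal.span
    ({q | ∃ v : V, q = X (v, 0) - 1} ∪
     {q | ∃ (c : k) (v : V) (n : ℕ), q = X (c • v, n) - C (c ^ n) * X (v, n)} ∪
     {q | ∃ (v : V) (n m : ℕ),
        q = X (v, n) * X (v, m) - C ((n + m).choose n : k) * X (v, n + m)} ∪
     {q | ∃ (v w : V) (n : ℕ),
        q = X (v + w, n) - ∑ ij ∈ Finset.HasAntidiagonal.antidiagonal n, X (v, ij.1) * X (w, ij.2)})

/-- The divided power algebra `Γ*_k(V)` of a `k`-module `V`. -/
abbrev DividedPowerAlg (k V : Type*) [CommRing k] [AddCommGroup V] [Module k V] :=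
  MvPolynomial (V × ℕ) k ⧸ dpRelations k V

/-- The divided power `v^[n] ∈ Γ*_k(V)`. -/
noncomputable def dp (k : Type*) {V : Type*} [CommRing k] [AddCommGroup V] [Module k V]
    (v : V) (n : ℕ) : DividedPowerAlg k V :=
  Ideal.Quotient.mk _ (X (v, n))

/-- The `d`-th divided power module `Γ^d_k(V)`: the degree-`d` homogeneous component of
`Γ*_k(V)`, i.e. the span of the products `v₁^[i₁] ⋯ v_r^[i_r]` with `i₁ + ⋯ + i_r = d`. -/
noncomputable def gammaDP (k : Type*) (V : Type*) [CommRing k] [AddCommGroup V] [Module k V] (d : ℕ) :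
    Submodule k (DividedPowerAlg k V) :=
  Submodule.span k {x | ∃ (r : ℕ) (f : Fin r → V) (g : Fin r → ℕ),
    (∑ a, g a) = d ∧ x = ∏ a, dp k (f a) (g a)}

open Classical in
/-- `ι : Γ → Γ*_k(A)` exhibits the ring `Γ` as the `d`-th divided power `Γ^d_k(A)` of the
`k`-algebra `A`, endowed with its canonical ring structure (coming from the lax monoidal
structure of `Γ^d`): `ι` is an injective additive map with image `Γ^d_k(A)`, the unit of `Γ`
corresponds to `1^[d]`, and multiplication is given on generators by
`(∏ₐ xₐ^[iₐ])·(∏_b y_b^[j_b]) = ∑_{(m_{ab})} ∏_{a,b} (xₐ·y_b)^[m_{ab}]`, the sum being over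
matrices of nonnegative integers with row sums `(iₐ)` and column sums `(j_b)`. -/
def IsCanonicalGammaRing (k A : Type*) [CommRing k] [Ring A] [Module k A] (d : ℕ)
    (Γ : Type*) [Ring Γ] (ι : Γ →+ DividedPowerAlg k A) : Prop :=
  Function.Injective ι ∧
  Set.range ι = (gammaDP k A d : Set (DividedPowerAlg k A)) ∧
  ι 1 = dp k (1 : A) d ∧
  ∀ (r s : ℕ) (x : Fin r → A) (ix : Fin r → ℕ) (y : Fin s → A) (iy : Fin s → ℕ),
    (∑ a, ix a) = d → (∑ b, iy b) = d →
    ∀ P Q : Γ, ι P = (∏ a, dp k (x a) (ix a)) → ι Q = (∏ b, dp k (y b) (iy b)) →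
      ι (P * Q) = ∑ m : Fin r → Fin s → Fin (d + 1),
        if (∀ a, (∑ b, (m a b : ℕ)) = ix a) ∧ (∀ b, (∑ a, (m a b : ℕ)) = iy b)
          then ∏ a, ∏ b, dp k (x a * y b) (m a b : ℕ) else 0

namespace DividedPowerAlg

variable {k V W : Type*} [CommRing k] [AddCommGroup V] [Module k V] [AddCommGroup W] [Module k W]

theorem rename_mem_dpRelations (f : V →ₗ[k] W) {p : MvPolynomial (V × ℕ) k}
    (hp : p ∈ dpRelations k V) : rename (Prod.map f id) p ∈ dpRelations k W := by
  refine (Ideal.span_le.mpr ?_ : dpRelations k V ≤ (dpRelations k W).comap (rename _)) hp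
  rintro _ (((⟨v, rfl⟩ | ⟨c, v, n, rfl⟩) | ⟨v, n, m, rfl⟩) | ⟨v, w, n, rfl⟩) <;>
    apply Ideal.subset_span
  · exact Or.inl <| Or.inl <| Or.inl ⟨f v, by simp⟩
  · exact Or.inl <| Or.inl <| Or.inr ⟨c, f v, n, by simp⟩
  · exact Or.inl <| Or.inr ⟨f v, n, m, by simp⟩
  · exact Or.inr ⟨f v, f w, n, by simp⟩

noncomputable def map (f : V →ₗ[k] W) : DividedPowerAlg k V →ₐ[k] DividedPowerAlg k W :=
  Ideal.Quotient.liftₐ _ ((Ideal.Quotient.mkₐ k _).comp (rename (Prod.map f id)))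
    fun _ hp => Ideal.Quotient.eq_zero_iff_mem.mpr (rename_mem_dpRelations f hp)

theorem map_mk (f : V →ₗ[k] W) (p : MvPolynomial (V × ℕ) k) :
    map f (Ideal.Quotient.mk _ p) = Ideal.Quotient.mk _ (rename (Prod.map f id) p) :=
  rfl

@[simp]
theorem map_dp (f : V →ₗ[k] W) (v : V) (n : ℕ) : map f (dp k v n) = dp k (f v) n := by
  simp [dp, map_mk]

theorem map_mem_gammaDP (f : V →ₗ[k] W) {d : ℕ} {x : DividedPowerAlg k V}
    (hx : x ∈ gammaDP k V d) : map f x ∈ gammaDP k W d := by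
  refine (Submodule.span_le.mpr ?_ : gammaDP k V d ≤ (gammaDP k W d).comap (map f).toLinearMap) hx
  rintro _ ⟨r, v, g, hg, rfl⟩
  exact Submodule.subset_span ⟨r, f ∘ v, g, hg, by simp⟩

end DividedPowerAlg

namespace IsCanonicalGammaRing

open DividedPowerAlg

section Basic

variable {A : Type*} [Ring A] {d : ℕ} {Γ : Type*} [Ring Γ] {ι : Γ →+ DividedPowerAlg ℤ A}
  (hΓ : IsCanonicalGammaRing ℤ A d Γ ι)
include hΓ

theorem mem_gammaDP (P : Γ) : ι P ∈ gammaDP ℤ A d := by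
  rw [← SetLike.mem_coe, ← hΓ.2.1]
  exact Set.mem_range_self P

theorem exists_eq {x : DividedPowerAlg ℤ A} (hx : x ∈ gammaDP ℤ A d) : ∃ P, ι P = x :=
  (hΓ.2.1 ▸ hx : x ∈ Set.range ι)

theorem exists_eq_prod_dp {r : ℕ} (v : Fin r → A) (iv : Fin r → ℕ) (hiv : ∑ a, iv a = d) :
    ∃ P, ι P = ∏ a, dp ℤ (v a) (iv a) :=
  hΓ.exists_eq (Submodule.subset_span ⟨r, v, iv, hiv, rfl⟩)

theorem exists_eq_dp (x : A) : ∃ P, ι P = dp ℤ x d := by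
  simpa using hΓ.exists_eq_prod_dp (fun _ : Fin 1 => x) (fun _ => d) (by simp)

theorem mem_of_forall_prod_dp_mem (H : AddSubgroup Γ)
    (h : ∀ (P : Γ) (r : ℕ) (v : Fin r → A) (iv : Fin r → ℕ), ∑ a, iv a = d →
      ι P = ∏ a, dp ℤ (v a) (iv a) → P ∈ H) (P : Γ) : P ∈ H := by
  have hspan : gammaDP ℤ A d ≤ AddSubgroup.toIntSubmodule (H.map ι) := by
    refine Submodule.span_le.mpr ?_
    rintro _ ⟨r, v, iv, hiv, rfl⟩
    obtain ⟨Q, hQ⟩ := hΓ.exists_eq_prod_dp v iv hiv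
    exact ⟨Q, h Q r v iv hiv hQ, hQ⟩
  obtain ⟨Q, hQ, hQP⟩ := hspan (hΓ.mem_gammaDP P)
  exact hΓ.1 hQP ▸ hQ

theorem addMonoidHom_ext {M : Type*} [AddGroup M] {f g : Γ →+ M}
    (h : ∀ (P : Γ) (r : ℕ) (v : Fin r → A) (iv : Fin r → ℕ), ∑ a, iv a = d →
      ι P = ∏ a, dp ℤ (v a) (iv a) → f P = g P) : f = g :=
  AddMonoidHom.ext <| hΓ.mem_of_forall_prod_dp_mem (AddMonoidHom.eqLocus f g) h

theorem ι_mul_dp {r : ℕ} {x : Fin r → A} {ix : Fin r → ℕ} (hix : ∑ a, ix a = d)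
    {y : A} {P Q : Γ} (hP : ι P = ∏ a, dp ℤ (x a) (ix a)) (hQ : ι Q = dp ℤ y d) :
    ι (P * Q) = ∏ a, dp ℤ (x a * y) (ix a) := by
  classical
  have hlt (a : Fin r) : ix a < d + 1 :=
    Nat.lt_succ_of_le (hix ▸ Finset.single_le_sum (fun _ _ => Nat.zero_le _) (Finset.mem_univ a))
  let m₀ : Fin r → Fin 1 → Fin (d + 1) := fun a _ => ⟨ix a, hlt a⟩
  rw [hΓ.2.2.2 r 1 x ix (fun _ => y) (fun _ => d) hix (by simp) P Q hP (by simpa using hQ),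
    Fintype.sum_eq_single m₀, if_pos ⟨fun a => by simp [m₀], fun _ => by simp [m₀, hix]⟩]
  · simp [m₀]
  · intro m hm
    refine if_neg fun ⟨hrow, _⟩ => hm (funext fun a => funext fun b => Fin.ext ?_)
    simpa [Fin.fin_one_eq_zero b, m₀] using hrow a

theorem ι_dp_mul_dp {x y : A} {P Q : Γ} (hP : ι P = dp ℤ x d) (hQ : ι Q = dp ℤ y d) :
    ι (P * Q) = dp ℤ (x * y) d := by
  simpa using
    hΓ.ι_mul_dp (x := fun _ : Fin 1 => x) (ix := fun _ => d) (by simp) (by simpa using hP) hQ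

theorem ι_mul_dp_eq_map {z : A} {Q : Γ} (hQ : ι Q = dp ℤ z d) (P : Γ) :
    ι (P * Q) = DividedPowerAlg.map (LinearMap.mulRight ℤ z) (ι P) := by
  have key : ι.comp (AddMonoidHom.mulRight Q) =
      (DividedPowerAlg.map (LinearMap.mulRight ℤ z)).toLinearMap.toAddMonoidHom.comp ι :=
    hΓ.addMonoidHom_ext fun P r v iv hiv hP => by
      simp [hΓ.ι_mul_dp hiv hP hQ, hP]
  exact DFunLike.congr_fun key P

/-- `T^[d] = {t^[d] | t ∈ T}`. -/
def dpSubmonoid (T : Submonoid A) : Submonoid Γ where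
  carrier := {g | ∃ t ∈ T, ι g = dp ℤ t d}
  one_mem' := ⟨1, T.one_mem, hΓ.2.2.1⟩
  mul_mem' := by
    rintro _ _ ⟨t, ht, hg⟩ ⟨s, hs, hh⟩
    exact ⟨t * s, T.mul_mem ht hs, hΓ.ι_dp_mul_dp hg hh⟩

end Basic

section Map

variable {A B : Type*} [Ring A] [Ring B] {d : ℕ} {Γ ΓB : Type*} [Ring Γ] [Ring ΓB]
  {ι : Γ →+ DividedPowerAlg ℤ A} {ιB : ΓB →+ DividedPowerAlg ℤ B}
  (hΓ : IsCanonicalGammaRing ℤ A d Γ ι) (hΓB : IsCanonicalGammaRing ℤ B d ΓB ιB) (φ : A →+* B)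
include hΓ hΓB

theorem exists_eq_map (P : Γ) : ∃ Q, ιB Q = DividedPowerAlg.map φ.toIntAlgHom.toLinearMap (ι P) :=
  hΓB.exists_eq (map_mem_gammaDP _ (hΓ.mem_gammaDP P))

noncomputable def mapAddHom : Γ →+ ΓB where
  toFun P := (hΓ.exists_eq_map hΓB φ P).choose
  map_zero' := hΓB.1 <| by rw [(hΓ.exists_eq_map hΓB φ 0).choose_spec]; simp
  map_add' P Q := hΓB.1 <| by
    rw [(hΓ.exists_eq_map hΓB φ (P + Q)).choose_spec, map_add ιB,
      (hΓ.exists_eq_map hΓB φ P).choose_spec, (hΓ.exists_eq_map hΓB φ Q).choose_spec, map_add,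
      map_add]

theorem ι_mapAddHom (P : Γ) :
    ιB (hΓ.mapAddHom hΓB φ P) = DividedPowerAlg.map φ.toIntAlgHom.toLinearMap (ι P) :=
  (hΓ.exists_eq_map hΓB φ P).choose_spec

theorem mapAddHom_mul_of_eq_prod_dp {r s : ℕ} {x : Fin r → A} {ix : Fin r → ℕ} {y : Fin s → A}
    {iy : Fin s → ℕ} (hix : ∑ a, ix a = d) (hiy : ∑ b, iy b = d) {P Q : Γ}
    (hP : ι P = ∏ a, dp ℤ (x a) (ix a)) (hQ : ι Q = ∏ b, dp ℤ (y b) (iy b)) :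
    hΓ.mapAddHom hΓB φ (P * Q) = hΓ.mapAddHom hΓB φ P * hΓ.mapAddHom hΓB φ Q := by
  classical
  refine hΓB.1 ?_
  rw [hΓB.2.2.2 r s (φ ∘ x) ix (φ ∘ y) iy hix hiy _ _ (by simp [ι_mapAddHom, hP])
    (by simp [ι_mapAddHom, hQ]), ι_mapAddHom, hΓ.2.2.2 r s x ix y iy hix hiy P Q hP hQ]
  simp [apply_ite]

theorem mapAddHom_mul (P Q : Γ) :
    hΓ.mapAddHom hΓB φ (P * Q) = hΓ.mapAddHom hΓB φ P * hΓ.mapAddHom hΓB φ Q := by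
  set F := hΓ.mapAddHom hΓB φ
  have hgen {r : ℕ} {x : Fin r → A} {ix : Fin r → ℕ} (hix : ∑ a, ix a = d) {P : Γ}
      (hP : ι P = ∏ a, dp ℤ (x a) (ix a)) (Q : Γ) : F (P * Q) = F P * F Q := by
    have := hΓ.addMonoidHom_ext (f := F.comp (AddMonoidHom.mulLeft P))
      (g := (AddMonoidHom.mulLeft (F P)).comp F) fun Q _ _ _ hiy hQ =>
        hΓ.mapAddHom_mul_of_eq_prod_dp hΓB φ hix hiy hP hQ
    exact DFunLike.congr_fun this Q
  have := hΓ.addMonoidHom_ext (f := F.comp (AddMonoidHom.mulRight Q))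
    (g := (AddMonoidHom.mulRight (F Q)).comp F) fun P _ _ _ hix hP => hgen hix hP Q
  exact DFunLike.congr_fun this P

noncomputable def map : Γ →+* ΓB :=
  { hΓ.mapAddHom hΓB φ with
    map_one' := hΓB.1 <| by simp [ι_mapAddHom, hΓ.2.2.1, hΓB.2.2.1]
    map_mul' := hΓ.mapAddHom_mul hΓB φ }

theorem ι_map (P : Γ) :
    ιB (hΓ.map hΓB φ P) = DividedPowerAlg.map φ.toIntAlgHom.toLinearMap (ι P) :=
  hΓ.ι_mapAddHom hΓB φ P

end Map

end IsCanonicalGammaRing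

theorem IsLocalization.exists_forall_mul_eq_mul {R : Type*} [CommRing R] (T : Submonoid R)
    (S : Type*) [CommRing S] [Algebra R S] [IsLocalization T S] {ι : Type*} (s : Finset ι)
    (a b : ι → R) :
    ∃ u : T, ∀ i ∈ s, algebraMap R S (a i) = algebraMap R S (b i) → a i * u = b i * u := by
  have (i : ι) : ∃ c : T, algebraMap R S (a i) = algebraMap R S (b i) → a i * c = b i * c := by
    by_cases h : algebraMap R S (a i) = algebraMap R S (b i)
    · obtain ⟨c, hc⟩ := exists_of_eq (M := T) h
      exact ⟨c, fun _ => by rw [mul_comm, hc, mul_comm]⟩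
    · exact ⟨1, fun h' => (h h').elim⟩
  choose c hc using this
  refine ⟨∏ i ∈ s, c i, fun i hi h => ?_⟩
  obtain ⟨e, he⟩ := Finset.dvd_prod_of_mem c hi
  rw [he, Submonoid.coe_mul, ← mul_assoc, ← mul_assoc, hc i h]

namespace MvPolynomial

variable {k : Type*} [CommRing k] {σ : Type*}

theorem rename_prodMap_rename_prodMap {α β γ : Type*} (f : β → γ) (g : α → β)
    (p : MvPolynomial (α × σ) k) :
    rename (Prod.map f id) (rename (Prod.map g id) p) = rename (Prod.map (f ∘ g) id) p := by
  rw [rename_rename, Prod.map_comp_map, Function.comp_id]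

theorem rename_mul_rename_mul {R : Type*} [CommRing R] (a b : R) (p : MvPolynomial (R × σ) k) :
    rename (Prod.map (· * a) id) (rename (Prod.map (· * b) id) p) =
      rename (Prod.map (· * (b * a)) id) p := by
  rw [rename_prodMap_rename_prodMap]
  congr 3
  funext v
  simp [mul_assoc]

variable {R : Type*} [CommRing R] {S : Type*} [CommRing S] [Algebra R S]

theorem rename_algebraMap_rename_mul (t : R) (p : MvPolynomial (R × σ) k) :
    rename (Prod.map (algebraMap R S) id) (rename (Prod.map (· * t) id) p) =
      rename (Prod.map (· * algebraMap R S t) id) (rename (Prod.map (algebraMap R S) id) p) := by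
  rw [rename_prodMap_rename_prodMap, rename_prodMap_rename_prodMap]
  congr 3
  funext v
  simp

variable (T : Submonoid R) [IsLocalization T S]

theorem exists_rename_mul_eq_zero_of_rename_algebraMap_eq_zero {q : MvPolynomial (R × σ) k}
    (hq : rename (Prod.map (algebraMap R S) id) q = 0) :
    ∃ u : T, rename (Prod.map (· * (u : R)) id) q = 0 := by
  obtain ⟨s, q, rfl⟩ := exists_finset_rename q
  obtain ⟨u, hu⟩ :=
    IsLocalization.exists_forall_mul_eq_mul T S (s ×ˢ s) (fun p => p.1.1) (fun p => p.2.1)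
  let f : s → S × σ := Prod.map (algebraMap R S) id ∘ Subtype.val
  let g : s → R × σ := Prod.map (· * (u : R)) id ∘ Subtype.val
  -- `g` factors through `f` because `u` equalizes every pair of variables of `q` identified by `f`.
  have hgf : g.FactorsThrough f := by
    rintro ⟨⟨a, i⟩, ha⟩ ⟨⟨b, j⟩, hb⟩ hab
    simp only [f, g, Function.comp_apply, Prod.map, id, Prod.mk.injEq] at hab ⊢
    exact ⟨hu (_, _) (Finset.mk_mem_product ha hb) hab.1, hab.2⟩
  refine ⟨u, ?_⟩
  rw [rename_rename] at hq ⊢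
  change rename g q = 0
  rw [← hgf.extend_comp (fun z => (0, z.2)), ← rename_rename, hq, map_zero]

theorem exists_rename_algebraMap_eq_rename_mul (q : MvPolynomial (S × σ) k) :
    ∃ (u : T) (q' : MvPolynomial (R × σ) k),
      rename (Prod.map (algebraMap R S) id) q' = rename (Prod.map (· * algebraMap R S u) id) q := by
  obtain ⟨s, q, rfl⟩ := exists_finset_rename q
  obtain ⟨u, hu⟩ := IsLocalization.exist_integer_multiples_of_finite T fun i : s => i.1.1
  choose ℓ hℓ using hu
  refine ⟨u, rename (fun i => (ℓ i, i.1.2)) q, ?_⟩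
  rw [rename_rename, rename_rename]
  congr 2
  funext i
  simp [hℓ, Algebra.smul_def, mul_comm, Prod.map]

end MvPolynomial

namespace DividedPowerAlg

variable {k R S : Type*} [CommRing k] [CommRing R] [CommRing S] [Algebra k R] [Algebra k S]
  [Algebra R S] [IsScalarTower k R S] (T : Submonoid R) [IsLocalization T S]

variable (k S) in
def descentIdeal : Ideal (MvPolynomial (S × ℕ) k) where
  carrier := {x | ∃ (t : T), ∃ y ∈ dpRelations k R,
    rename (Prod.map (algebraMap R S) id) y = rename (Prod.map (· * algebraMap R S t) id) x}
  zero_mem' := ⟨1, 0, zero_mem _, by simp⟩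
  add_mem' := by
    rintro x₁ x₂ ⟨t₁, y₁, hy₁, e₁⟩ ⟨t₂, y₂, hy₂, e₂⟩
    refine ⟨t₁ * t₂,
      rename (Prod.map (· * (t₂ : R)) id) y₁ + rename (Prod.map (· * (t₁ : R)) id) y₂,
      add_mem (rename_mem_dpRelations (LinearMap.mulRight k (t₂ : R)) hy₁)
        (rename_mem_dpRelations (LinearMap.mulRight k (t₁ : R)) hy₂), ?_⟩
    rw [map_add, map_add, rename_algebraMap_rename_mul, rename_algebraMap_rename_mul, e₁, e₂,
      rename_mul_rename_mul, rename_mul_rename_mul, Submonoid.coe_mul, map_mul,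
      mul_comm (algebraMap R S t₂)]
  smul_mem' := by
    rintro q x ⟨t, y, hy, e⟩
    obtain ⟨u, q', hq'⟩ := exists_rename_algebraMap_eq_rename_mul T q
    refine ⟨u * t, rename (Prod.map (· * (t : R)) id) q' * rename (Prod.map (· * (u : R)) id) y,
      Ideal.mul_mem_left _ _ (rename_mem_dpRelations (LinearMap.mulRight k (u : R)) hy), ?_⟩
    rw [smul_eq_mul, map_mul, map_mul, rename_algebraMap_rename_mul, rename_algebraMap_rename_mul,
      e, hq', rename_mul_rename_mul, rename_mul_rename_mul, Submonoid.coe_mul, map_mul,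
      mul_comm (algebraMap R S u)]

theorem dpRelations_le_descentIdeal : dpRelations k S ≤ descentIdeal k S T := by
  refine Ideal.span_le.mpr ?_
  rintro _ (((⟨v, rfl⟩ | ⟨c, v, n, rfl⟩) | ⟨v, n, m, rfl⟩) | ⟨v, w, n, rfl⟩)
  · obtain ⟨⟨a, t⟩, hat⟩ := IsLocalization.surj T v
    exact ⟨t, X (a, 0) - 1, Ideal.subset_span <| Or.inl <| Or.inl <| Or.inl ⟨a, rfl⟩,
      by simp [hat]⟩
  · obtain ⟨⟨a, t⟩, hat⟩ := IsLocalization.surj T v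
    refine ⟨t, X (c • a, n) - C (c ^ n) * X (a, n),
      Ideal.subset_span <| Or.inl <| Or.inl <| Or.inr ⟨c, a, n, rfl⟩, ?_⟩
    have hc : algebraMap R S (c • a) = c • algebraMap R S a :=
      map_smul (IsScalarTower.toAlgHom k R S) c a
    simp [hat, hc]
  · obtain ⟨⟨a, t⟩, hat⟩ := IsLocalization.surj T v
    exact ⟨t, X (a, n) * X (a, m) - C ((n + m).choose n : k) * X (a, n + m),
      Ideal.subset_span <| Or.inl <| Or.inr ⟨a, n, m, rfl⟩, by simp [hat]⟩
  · obtain ⟨⟨a, t⟩, hat⟩ := IsLocalization.surj T v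
    obtain ⟨⟨b, s⟩, hbs⟩ := IsLocalization.surj T w
    have hv : v * (algebraMap R S t * algebraMap R S s) = algebraMap R S a * algebraMap R S s := by
      rw [← hat, mul_assoc]
    have hw : w * (algebraMap R S t * algebraMap R S s) = algebraMap R S b * algebraMap R S t := by
      rw [← hbs, mul_comm (algebraMap R S t), mul_assoc]
    refine ⟨t * s, X (a * s + b * t, n) -
        ∑ ij ∈ Finset.HasAntidiagonal.antidiagonal n, X (a * s, ij.1) * X (b * t, ij.2),
      Ideal.subset_span <| Or.inr ⟨a * s, b * t, n, rfl⟩, ?_⟩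
    simp [add_mul, hv, hw]

theorem exists_map_mulRight_eq_zero_of_map_eq_zero {x : DividedPowerAlg k R}
    (hx : map (IsScalarTower.toAlgHom k R S).toLinearMap x = 0) :
    ∃ t : T, map (LinearMap.mulRight k (t : R)) x = 0 := by
  obtain ⟨p, rfl⟩ := Ideal.Quotient.mk_surjective x
  rw [map_mk, Ideal.Quotient.eq_zero_iff_mem, AlgHom.coe_toLinearMap,
    IsScalarTower.coe_toAlgHom'] at hx
  obtain ⟨t, y, hy, hyp⟩ := dpRelations_le_descentIdeal T hx
  have hker :
      rename (Prod.map (algebraMap R S) id) (rename (Prod.map (· * (t : R)) id) p - y) = 0 := by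
    rw [map_sub, rename_algebraMap_rename_mul, hyp, sub_self]
  obtain ⟨u, hu⟩ := exists_rename_mul_eq_zero_of_rename_algebraMap_eq_zero T hker
  rw [map_sub, sub_eq_zero, rename_mul_rename_mul] at hu
  refine ⟨t * u, ?_⟩
  rw [map_mk, Ideal.Quotient.eq_zero_iff_mem]
  change rename (Prod.map (· * ((t : R) * u)) id) p ∈ _
  rw [hu]
  exact rename_mem_dpRelations (LinearMap.mulRight k (u : R)) hy

end DividedPowerAlg

namespace IsCanonicalGammaRing

open DividedPowerAlg

variable {R S : Type*} [CommRing R] [CommRing S] [Algebra R S] (T : Submonoid R)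
  [IsLocalization T S] {d : ℕ} {ΓR ΓS : Type*} [CommRing ΓR] [CommRing ΓS]
  {ι : ΓR →+ DividedPowerAlg ℤ R} {ιS : ΓS →+ DividedPowerAlg ℤ S}
  (hΓR : IsCanonicalGammaRing ℤ R d ΓR ι) (hΓS : IsCanonicalGammaRing ℤ S d ΓS ιS)
include hΓR hΓS

theorem isUnit_map_dpSubmonoid (g : hΓR.dpSubmonoid T) :
    IsUnit (hΓR.map hΓS (algebraMap R S) g) := by
  obtain ⟨g, t, ht, hg⟩ := g
  obtain ⟨u, hu⟩ := hΓS.exists_eq_dp (IsLocalization.mk' S 1 ⟨t, ht⟩)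
  refine IsUnit.of_mul_eq_one u (hΓS.1 ?_)
  rw [hΓS.ι_dp_mul_dp (x := algebraMap R S t) (by simp [ι_map, hg]) hu, hΓS.2.2.1,
    IsLocalization.mul_mk'_eq_mk'_of_mul, mul_one, IsLocalization.mk'_self]

theorem exists_mul_eq_zero_of_map_eq_zero {P : ΓR} (hP : hΓR.map hΓS (algebraMap R S) P = 0) :
    ∃ g ∈ hΓR.dpSubmonoid T, P * g = 0 := by
  have hιP : DividedPowerAlg.map (IsScalarTower.toAlgHom ℤ R S).toLinearMap (ι P) = 0 := by
    have := hΓR.ι_map hΓS (algebraMap R S) P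
    rw [hP, map_zero] at this
    exact this.symm
  obtain ⟨t, ht⟩ := exists_map_mulRight_eq_zero_of_map_eq_zero T hιP
  obtain ⟨g, hg⟩ := hΓR.exists_eq_dp (t : R)
  exact ⟨g, ⟨t, t.2, hg⟩, hΓR.1 (by rw [hΓR.ι_mul_dp_eq_map hg, ht, map_zero])⟩

theorem exists_mul_map_eq_map_of_eq_prod_dp {q : ΓS} {r : ℕ} {z : Fin r → S} {iz : Fin r → ℕ}
    (hiz : ∑ b, iz b = d) (hq : ιS q = ∏ b, dp ℤ (z b) (iz b)) :
    ∃ P, ∃ g ∈ hΓR.dpSubmonoid T,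
      q * hΓR.map hΓS (algebraMap R S) g = hΓR.map hΓS (algebraMap R S) P := by
  obtain ⟨t, ht⟩ := IsLocalization.exist_integer_multiples_of_finite T z
  choose c hc using ht
  obtain ⟨P, hP⟩ := hΓR.exists_eq_prod_dp c iz hiz
  obtain ⟨g, hg⟩ := hΓR.exists_eq_dp (t : R)
  refine ⟨P, g, ⟨t, t.2, hg⟩, hΓS.1 ?_⟩
  rw [hΓS.ι_mul_dp (y := algebraMap R S t) hiz hq (by simp [ι_map, hg]), ι_map, hP]
  simp [hc, Algebra.smul_def, mul_comm]

variable (M : Type*) [CommRing M] [Algebra ΓR M] [IsLocalization (hΓR.dpSubmonoid T) M]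

theorem lift_map_injective :
    Function.Injective (IsLocalization.lift (S := M) (hΓR.isUnit_map_dpSubmonoid T hΓS)) := by
  refine (IsLocalization.lift_injective_iff _).mpr fun P Q => ⟨fun h => ?_, fun h => ?_⟩
  · rw [← IsLocalization.lift_eq (S := M) (hΓR.isUnit_map_dpSubmonoid T hΓS), h,
      IsLocalization.lift_eq]
  · obtain ⟨g, hg, hPQ⟩ :=
      hΓR.exists_mul_eq_zero_of_map_eq_zero T hΓS (P := P - Q) (by rw [map_sub, h, sub_self])
    exact (IsLocalization.eq_iff_exists (hΓR.dpSubmonoid T) M).mpr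
      ⟨⟨g, hg⟩, by linear_combination hPQ⟩

theorem lift_map_surjective :
    Function.Surjective (IsLocalization.lift (S := M) (hΓR.isUnit_map_dpSubmonoid T hΓS)) := by
  refine fun q => hΓS.mem_of_forall_prod_dp_mem (RingHom.range _).toAddSubgroup
    (fun q _ _ _ hiz hq => ?_) q
  obtain ⟨P, g, hg, hPg⟩ := hΓR.exists_mul_map_eq_map_of_eq_prod_dp T hΓS hiz hq
  exact ⟨IsLocalization.mk' M P ⟨g, hg⟩,
    (IsLocalization.lift_mk'_spec _ _ _ _).mpr (by rw [mul_comm, hPg])⟩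

end IsCanonicalGammaRing

/-- **Divided powers and localization.** Let `R` be a commutative ring, `T ⊆ R` a
multiplicative subset and `d ∈ ℕ`.  Then `T^[d] = {t^[d] | t ∈ T}` is a multiplicative
subset of the commutative ring `Γ^d(R)` (with its canonical ring structure), and there is a
ring isomorphism `Γ^d(R[T⁻¹]) ≅ Γ^d(R)[(T^[d])⁻¹]`. -/
theorem gammaRing_localization
    (R : Type*) [CommRing R] (T : Submonoid R) (d : ℕ)
    (ΓR : Type*) [CommRing ΓR] (ι : ΓR →+ DividedPowerAlg ℤ R)
    (hΓR : IsCanonicalGammaRing ℤ R d ΓR ι)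
    (ΓRT : Type*) [CommRing ΓRT] (ι' : ΓRT →+ DividedPowerAlg ℤ (Localization T))
    (hΓRT : IsCanonicalGammaRing ℤ (Localization T) d ΓRT ι') :
    ∃ Td : Submonoid ΓR,
      (Td : Set ΓR) = {g : ΓR | ∃ t ∈ T, ι g = dp ℤ t d} ∧
      Nonempty (ΓRT ≃+* Localization Td) := by
  refine ⟨hΓR.dpSubmonoid T, rfl, ⟨?_⟩⟩
  exact (RingEquiv.ofBijective _ ⟨hΓR.lift_map_injective T hΓRT (Localization _),
    hΓR.lift_map_surjective T hΓRT (Localization _)⟩).symm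
end

section
/- Let k be a commutative noetherian ring and C a small preadditive category. If F is a noetherian object of the category of additive functors C → Ab, then Tor₁^ℤ(F, k) (computed objectwise) is a finitely generated object of the category of additive functors C → k-Mod. -/
/-!
Write `T(c) = ker (k ⊗ K(c) → k ⊗ P(c))`. Since `P(c)` is free, a Smith normal form computation
on a finitely generated direct summand of `P(c)` shows that `T(c)` is spanned by the symbols
`b ⊗ κ` with `n • b = 0` and `i κ = n • u` for some `n ≠ 0`. Such a symbol depends only on `b`
and on the `n`-torsion element `p u` of `F(c)`: additively in `p u`, `k`-linearly in `b` and
naturally in `c`. As `F` is noetherian, its torsion subfunctor is finitely generated, hence killed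
by some `N > 0`, and passing from `n` to `gcd n N` leaves only the levels `g ∣ N`. For each of
them the `g`-torsion subfunctor of `F` and the `g`-torsion ideal of `k` are finitely generated,
and the symbols built from pairs of generators generate `T`.
-/

open CategoryTheory TensorProduct Function Submodule

universe u v w

@[ext]
structure AddSubfunctor {C : Type u} [Category.{v} C] (F : C ⥤ AddCommGrpCat.{w}) where
  obj : ∀ c, AddSubgroup (F.obj c)
  map_mem : ∀ {c c' : C} (f : c ⟶ c') {x : F.obj c}, x ∈ obj c → F.map f x ∈ obj c'

namespace AddSubfunctor

variable {C : Type u} [Category.{v} C] {F : C ⥤ AddCommGrpCat.{w}}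

instance : PartialOrder (AddSubfunctor F) :=
  PartialOrder.lift obj fun _ _ => AddSubfunctor.ext

@[simps]
def toFunctor (S : AddSubfunctor F) : C ⥤ AddCommGrpCat.{w} where
  obj c := AddCommGrpCat.of (S.obj c)
  map f := AddCommGrpCat.ofHom <|
    ((F.map f).hom.comp (S.obj _).subtype).codRestrict _ fun x => S.map_mem f x.2

def ι (S : AddSubfunctor F) : S.toFunctor ⟶ F where
  app c := AddCommGrpCat.ofHom (S.obj c).subtype

def inclusion {S T : AddSubfunctor F} (h : S ≤ T) : S.toFunctor ⟶ T.toFunctor where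
  app c := AddCommGrpCat.ofHom (AddSubgroup.inclusion (h c))

section Additive

variable [Preadditive C] [F.Additive]

instance (S : AddSubfunctor F) : S.toFunctor.Additive where
  map_add {_ _ _ _} := by ext; apply Subtype.ext; simp [F.map_add]; rfl

instance (S : AddSubfunctor F) :
    Mono (ObjectProperty.homMk S.ι : AdditiveFunctor.of S.toFunctor ⟶ AdditiveFunctor.of F) :=
  haveI : ∀ c, Mono (S.ι.app c) := fun _ =>
    (AddCommGrpCat.mono_iff_injective _).2 Subtype.val_injective
  haveI := NatTrans.mono_of_mono_app S.ι
  (ObjectProperty.ι _).mono_of_mono_map this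

def toSubobject (S : AddSubfunctor F) : Subobject (AdditiveFunctor.of F) :=
  Subobject.mk (ObjectProperty.homMk S.ι : AdditiveFunctor.of S.toFunctor ⟶ AdditiveFunctor.of F)

theorem toSubobject_le_toSubobject {S T : AddSubfunctor F} :
    S.toSubobject ≤ T.toSubobject ↔ S ≤ T := by
  refine ⟨fun h c x hx => ?_, fun h =>
    Subobject.mk_le_mk_of_comm (ObjectProperty.homMk (inclusion h)) rfl⟩
  let y : T.obj c := (Subobject.ofMkLEMk _ _ h).hom.app c ⟨x, hx⟩
  have hy : (y : F.obj c) = x :=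
    congrArg (fun φ => (φ.hom.app c ⟨x, hx⟩ : F.obj c)) (Subobject.ofMkLEMk_comp h)
  exact hy ▸ y.2

theorem wellFoundedGT_of_subobject (h : WellFoundedGT (Subobject (AdditiveFunctor.of F))) :
    WellFoundedGT (AddSubfunctor F) :=
  (OrderEmbedding.ofMapLEIff toSubobject fun _ _ =>
    toSubobject_le_toSubobject).strictMono.wellFoundedGT

end Additive

variable (F) in
def span (s : Set ((c : C) × F.obj c)) : AddSubfunctor F where
  obj c := AddSubgroup.closure {y | ∃ q ∈ s, ∃ f : q.1 ⟶ c, y = F.map f q.2}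
  map_mem {_ _} f _ hx := by
    refine (AddSubgroup.closure_le (K := (AddSubgroup.closure _).comap (F.map f).hom)).2 ?_ hx
    rintro _ ⟨q, hq, g, rfl⟩
    exact AddSubgroup.subset_closure ⟨q, hq, g ≫ f, by simp⟩

theorem mem_span {s : Set ((c : C) × F.obj c)} {q : (c : C) × F.obj c} (hq : q ∈ s) :
    q.2 ∈ (span F s).obj q.1 :=
  AddSubgroup.subset_closure ⟨q, hq, 𝟙 _, by simp⟩

theorem span_le {s : Set ((c : C) × F.obj c)} {S : AddSubfunctor F} :
    span F s ≤ S ↔ ∀ q ∈ s, q.2 ∈ S.obj q.1 := by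
  refine ⟨fun h q hq => h _ (mem_span hq), fun h c => ?_⟩
  rw [span, AddSubgroup.closure_le]
  rintro _ ⟨q, hq, f, rfl⟩
  exact S.map_mem f (h q hq)

theorem exists_finite_span_eq [WellFoundedGT (AddSubfunctor F)] (S : AddSubfunctor F) :
    ∃ s : Set ((c : C) × F.obj c), s.Finite ∧ span F s = S := by
  obtain ⟨_, ⟨s, ⟨hfin, hsS⟩, rfl⟩, hmax⟩ := wellFounded_gt.has_min
    (span F '' {s | s.Finite ∧ ∀ q ∈ s, q.2 ∈ S.obj q.1}) ⟨_, ∅, ⟨Set.finite_empty, by simp⟩, rfl⟩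
  refine ⟨s, hfin, le_antisymm (span_le.2 hsS) fun c x hx => ?_⟩
  by_contra hxs
  refine hmax (span F (insert ⟨c, x⟩ s)) ⟨_, ⟨hfin.insert _, by simpa [hx] using hsS⟩, rfl⟩ ?_
  refine lt_of_le_of_ne (span_le.2 fun q hq => mem_span (Set.mem_insert_of_mem _ hq)) fun h => ?_
  exact hxs (h ▸ mem_span (Set.mem_insert _ _))

variable (F) in
def torsion : AddSubfunctor F where
  obj c := AddCommGroup.torsion (F.obj c)
  map_mem f _ hx := (F.map f).hom.isOfFinAddOrder hx

variable (F) in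
def torsionBy (n : ℕ) : AddSubfunctor F where
  obj c := AddSubgroup.torsionBy (F.obj c) n
  map_mem f x hx := by
    rw [AddSubgroup.torsionBy.nsmul_iff] at hx ⊢
    rw [← map_nsmul, hx, map_zero]

theorem exists_nsmul_eq_zero_of_isOfFinAddOrder [WellFoundedGT (AddSubfunctor F)] :
    ∃ N : ℕ, 0 < N ∧ ∀ c (x : F.obj c), IsOfFinAddOrder x → N • x = 0 := by
  obtain ⟨s, hfin, hs⟩ := exists_finite_span_eq (torsion F)
  have hord : ∀ q ∈ hfin.toFinset, 0 < addOrderOf q.2 := fun q hq =>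
    IsOfFinAddOrder.addOrderOf_pos
      (show q.2 ∈ (torsion F).obj q.1 from hs ▸ mem_span (hfin.mem_toFinset.1 hq))
  let N := ∏ q ∈ hfin.toFinset, addOrderOf q.2
  have hle : span F s ≤ torsionBy F N := span_le.2 fun q hq => by
    rw [torsionBy, AddSubgroup.torsionBy.nsmul_iff, ← addOrderOf_dvd_iff_nsmul_eq_zero]
    exact Finset.dvd_prod_of_mem _ (hfin.mem_toFinset.2 hq)
  exact ⟨N, Finset.prod_pos hord, fun c x hx =>
    AddSubgroup.torsionBy.nsmul_iff.1 (hle c (hs.symm ▸ hx))⟩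

end AddSubfunctor

theorem LinearMap.baseChange_injective_of_comp_eq_id {R A M N : Type*} [CommSemiring R]
    [Semiring A] [Algebra R A] [AddCommMonoid M] [AddCommMonoid N] [Module R M] [Module R N]
    {f : M →ₗ[R] N} {g : N →ₗ[R] M} (h : g ∘ₗ f = LinearMap.id) : Injective (f.baseChange A) :=
  LeftInverse.injective (g := g.baseChange A) fun x => by
    rw [← LinearMap.comp_apply, ← LinearMap.baseChange_comp, h, LinearMap.baseChange_id,
      LinearMap.id_apply]

theorem Module.Basis.exists_finite_retract {R M I : Type*} [Ring R] [AddCommGroup M] [Module R M]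
    (b : Module.Basis I R M) {s : Set M} (hs : s.Finite) :
    ∃ M₀ : Submodule R M, s ⊆ M₀ ∧ Module.Finite R M₀ ∧ Module.Free R M₀ ∧
      ∃ ρ : M →ₗ[R] M₀, ρ ∘ₗ M₀.subtype = LinearMap.id := by
  classical
  let S₀ : Set I := ⋃ x ∈ s, ((b.repr x).support : Set I)
  have hS₀ : S₀.Finite := hs.biUnion fun x _ => Finset.finite_toSet _
  refine ⟨span R (b '' S₀), fun x hx => span_mono (Set.image_mono ?_) (b.mem_span_repr_support x),
    Module.Finite.span_of_finite R (hS₀.image b), ?_, ?_⟩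
  · exact Set.subset_biUnion_of_mem (u := fun x => ((b.repr x).support : Set I)) hx
  · rw [Set.image_eq_range]
    exact .of_basis (Module.Basis.span (b.linearIndependent.comp _ Subtype.val_injective))
  · have hcompl := b.linearIndependent.isCompl_span_image b.span_eq (isCompl_compl (x := S₀))
    exact ⟨(span R (b '' S₀)).projectionOnto _ hcompl,
      LinearMap.ext fun x => projectionOnto_apply_left hcompl x⟩

section Symbols

variable {k : Type*} [CommRing k] {A B Q : Type*} [AddCommGroup A] [AddCommGroup B]
  [AddCommGroup Q]

variable (k) in
def torsionSymbols (ι : A →ₗ[ℤ] B) : Set (k ⊗[ℤ] A) :=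
  {z | ∃ (n : ℤ) (b : k) (κ : A) (u : B), n ≠ 0 ∧ n • b = 0 ∧ ι κ = n • u ∧ z = b ⊗ₜ κ}

variable (k) in
def symbolsOver (ι : A →ₗ[ℤ] B) (π : B →ₗ[ℤ] Q) (g : ℕ) (a : Q) : Set (k ⊗[ℤ] A) :=
  {z | ∃ (b : k) (κ : A) (u : B), g • b = 0 ∧ ι κ = g • u ∧ π u = a ∧ z = b ⊗ₜ κ}

variable {ι : A →ₗ[ℤ] B} {π : B →ₗ[ℤ] Q}

theorem image_torsionSymbols_subset {A' B' : Type*} [AddCommGroup A'] [AddCommGroup B']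
    {ι' : A' →ₗ[ℤ] B'} {α : A' →ₗ[ℤ] A} {β : B' →ₗ[ℤ] B} (h : ι ∘ₗ α = β ∘ₗ ι') :
    α.baseChange k '' torsionSymbols k ι' ⊆ torsionSymbols k ι := by
  rintro _ ⟨_, ⟨n, b, κ, u, hn, hb, hκ, rfl⟩, rfl⟩
  refine ⟨n, b, α κ, β u, hn, hb, ?_, rfl⟩
  rw [← LinearMap.comp_apply, h, LinearMap.comp_apply, hκ, map_zsmul]

theorem ker_baseChange_le_span_torsionSymbols_of_finite [Module.Free ℤ B] [Module.Finite ℤ B]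
    (hι : Injective ι) : LinearMap.ker (ι.baseChange k) ≤ span k (torsionSymbols k ι) := by
  intro z hz
  obtain ⟨n, snf⟩ := (LinearMap.range ι).smithNormalForm (Module.Free.chooseBasis ℤ B)
  let bA : Module.Basis (Fin n) ℤ A := snf.bN.map (LinearEquiv.ofInjective ι hι).symm
  have hbA : ∀ j, ι (bA j) = snf.a j • snf.bM (snf.f j) := fun j => by
    rw [← snf.snf j]
    exact congrArg Subtype.val ((LinearEquiv.ofInjective ι hι).apply_symm_apply (snf.bN j))
  let d := (bA.baseChange k).repr z
  have hz_eq : z = ∑ j, d j ⊗ₜ bA j := by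
    conv_lhs => rw [← (bA.baseChange k).sum_repr z]
    simp [Module.Basis.baseChange_apply, smul_tmul', d]
  have hd : ∀ j, snf.a j • d j = 0 := by
    have hli := (snf.bM.baseChange k).linearIndependent.comp snf.f snf.f.injective
    refine Fintype.linearIndependent_iff.1 hli _ ?_
    rw [← LinearMap.mem_ker.1 hz, hz_eq, map_sum]
    refine Finset.sum_congr rfl fun j _ => ?_
    simp [hbA, Module.Basis.baseChange_apply, smul_tmul']
  rw [hz_eq]
  refine sum_mem fun j _ => subset_span
    ⟨snf.a j, d j, bA j, _, fun ha => bA.ne_zero j (hι ?_), hd j, hbA j, rfl⟩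
  rw [hbA, ha, zero_smul, map_zero]

theorem ker_baseChange_le_span_torsionSymbols [Module.Free ℤ B] (hι : Injective ι) :
    LinearMap.ker (ι.baseChange k) ≤ span k (torsionSymbols k ι) := by
  intro z hz
  obtain ⟨T, rfl⟩ := TensorProduct.exists_finset z
  obtain ⟨B₀, hT, _, _, ρ, hρ⟩ := (Module.Free.chooseBasis ℤ B).exists_finite_retract
    (T.finite_toSet.image fun t : k × A => ι t.2)
  let A₀ := B₀.comap ι
  let ι₀ : A₀ →ₗ[ℤ] B₀ := (ι ∘ₗ A₀.subtype).codRestrict B₀ fun x => x.2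
  have hsq : ι ∘ₗ A₀.subtype = B₀.subtype ∘ₗ ι₀ := rfl
  obtain ⟨y, hy⟩ : ∑ t ∈ T, t.1 ⊗ₜ t.2 ∈ LinearMap.range (A₀.subtype.baseChange k) :=
    sum_mem fun t ht => ⟨t.1 ⊗ₜ ⟨t.2, hT ⟨t, ht, rfl⟩⟩, rfl⟩
  have hy₀ : y ∈ LinearMap.ker (ι₀.baseChange k) := by
    apply LinearMap.baseChange_injective_of_comp_eq_id hρ
    rw [map_zero, ← LinearMap.comp_apply, ← LinearMap.baseChange_comp, ← hsq,
      LinearMap.baseChange_comp, LinearMap.comp_apply, hy]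
    exact hz
  have hι₀ : Injective ι₀ := fun x y h => Subtype.ext (hι (congrArg Subtype.val h))
  have := mem_map_of_mem (f := A₀.subtype.baseChange k)
    (ker_baseChange_le_span_torsionSymbols_of_finite hι₀ hy₀)
  rw [map_span, hy] at this
  exact span_mono (image_torsionSymbols_subset hsq) this

theorem exists_tmul_eq_tmul_gcd (hι : Injective ι) {n : ℤ} {N : ℕ} {b : k} {κ κN : A} {u : B}
    (hb : n • b = 0) (hκ : ι κ = n • u) (hκN : ι κN = N • u) :
    ∃ (b' : k) (κ' : A), n.gcd N • b' = 0 ∧ ι κ' = n.gcd N • u ∧ b ⊗ₜ[ℤ] κ = b' ⊗ₜ κ' := by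
  obtain ⟨m, hm⟩ := Int.gcd_dvd_left n N
  let κ' := n.gcdA N • κ + n.gcdB N • κN
  have hκ' : ι κ' = n.gcd N • u := by
    rw [← natCast_zsmul, Int.gcd_eq_gcd_ab, map_add, map_zsmul, map_zsmul, hκ, hκN,
      ← natCast_zsmul, smul_smul, smul_smul, ← add_smul, mul_comm, mul_comm (n.gcdB N)]
  have hκ_eq : κ = m • κ' := hι <| by
    rw [map_zsmul, hκ', hκ, ← natCast_zsmul, smul_smul, mul_comm, ← hm]
  refine ⟨m • b, κ', ?_, hκ', ?_⟩
  · rw [← natCast_zsmul, smul_smul, ← hm, hb]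
  · rw [hκ_eq, tmul_smul, smul_tmul']

theorem ker_baseChange_le_span_symbolsOver [Module.Free ℤ B] (hι : Injective ι)
    (hexact : Exact ι π) {N : ℕ} (hN : ∀ q : Q, IsOfFinAddOrder q → N • q = 0) :
    LinearMap.ker (ι.baseChange k) ≤
      span k {z | ∃ g, g ∣ N ∧ ∃ a, z ∈ symbolsOver k ι π g a} := by
  refine (ker_baseChange_le_span_torsionSymbols hι).trans (span_mono ?_)
  rintro _ ⟨n, b, κ, u, hn, hb, hκ, rfl⟩
  have hu : IsOfFinAddOrder (π u) := isOfFinAddOrder_iff_zsmul_eq_zero.2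
    ⟨n, hn, by rw [← map_zsmul, ← hκ, hexact.apply_apply_eq_zero]⟩
  obtain ⟨κN, hκN⟩ := (hexact (N • u)).1 (by rw [map_nsmul, hN _ hu])
  obtain ⟨b', κ', hb', hκ', heq⟩ := exists_tmul_eq_tmul_gcd hι hb hκ hκN
  exact ⟨n.gcd N, Int.natCast_dvd_natCast.1 (Int.gcd_dvd_right n N), π u,
    b', κ', u, hb', hκ', rfl, heq⟩

theorem symbolsOver_subset_ker {g : ℕ} {a : Q} :
    symbolsOver k ι π g a ⊆ LinearMap.ker (ι.baseChange k) := by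
  rintro _ ⟨b, κ, u, hb, hκ, -, rfl⟩
  rw [SetLike.mem_coe, LinearMap.mem_ker, LinearMap.baseChange_tmul, hκ, tmul_smul, smul_tmul',
    hb, zero_tmul]

theorem nsmul_apply_eq_zero_of_lift (hexact : Exact ι π) {g : ℕ} {κ : A} {u : B}
    (hκ : ι κ = g • u) : g • π u = 0 := by
  rw [← map_nsmul, ← hκ, hexact.apply_apply_eq_zero]

theorem exists_lift_of_nsmul_eq_zero (hπ : Surjective π) (hexact : Exact ι π) {g : ℕ} {a : Q}
    (ha : g • a = 0) : ∃ (κ : A) (u : B), ι κ = g • u ∧ π u = a := by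
  obtain ⟨u, rfl⟩ := hπ a
  obtain ⟨κ, hκ⟩ := (hexact (g • u)).1 (by rw [map_nsmul, ha])
  exact ⟨κ, u, hκ, rfl⟩

theorem tmul_eq_tmul_of_lift (hι : Injective ι) (hexact : Exact ι π) {g : ℕ} {b : k}
    (hb : g • b = 0) {κ κ' : A} {u u' : B} (hκ : ι κ = g • u) (hκ' : ι κ' = g • u')
    (hu : π u = π u') : b ⊗ₜ[ℤ] κ = b ⊗ₜ κ' := by
  obtain ⟨w, hw⟩ := (hexact (u' - u)).1 (by rw [map_sub, hu, sub_self])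
  have : κ' = κ + g • w := hι <| by
    rw [map_add, map_nsmul, hw, hκ, hκ', smul_sub, add_sub_cancel]
  rw [this, tmul_add, tmul_smul, smul_tmul', hb, zero_tmul, add_zero]

theorem symbolsOver_subset_of_mem_closure (hι : Injective ι) (hπ : Surjective π)
    (hexact : Exact ι π) {M : Submodule k (k ⊗[ℤ] A)} {g : ℕ} {S : Set Q}
    (hS : ∀ s ∈ S, g • s = 0 ∧ symbolsOver k ι π g s ⊆ M) {a : Q}
    (ha : a ∈ AddSubgroup.closure S) : symbolsOver k ι π g a ⊆ M := by
  suffices g • a = 0 ∧ symbolsOver k ι π g a ⊆ M from this.2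
  induction ha using AddSubgroup.closure_induction with
  | mem s hs => exact hS s hs
  | zero =>
    refine ⟨smul_zero g, ?_⟩
    rintro _ ⟨b, κ, u, hb, hκ, hu, rfl⟩
    obtain ⟨w, rfl⟩ := (hexact u).1 hu
    obtain rfl : κ = g • w := hι (by rw [hκ, map_nsmul])
    rw [tmul_smul, smul_tmul', hb, zero_tmul]
    exact zero_mem M
  | add x y _ _ hx hy =>
    refine ⟨by rw [smul_add, hx.1, hy.1, add_zero], ?_⟩
    rintro _ ⟨b, κ, u, hb, hκ, hu, rfl⟩
    obtain ⟨κ₁, u₁, hκ₁, rfl⟩ := exists_lift_of_nsmul_eq_zero hπ hexact hx.1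
    have h₂ : b ⊗ₜ (κ - κ₁) ∈ M := hy.2 ⟨b, κ - κ₁, u - u₁, hb,
      by rw [map_sub, hκ, hκ₁, smul_sub], by rw [map_sub, hu, add_sub_cancel_left], rfl⟩
    simpa [tmul_sub] using add_mem (hx.2 ⟨b, κ₁, u₁, hb, hκ₁, rfl, rfl⟩) h₂
  | neg x _ hx =>
    refine ⟨by rw [smul_neg, hx.1, neg_zero], ?_⟩
    rintro _ ⟨b, κ, u, hb, hκ, hu, rfl⟩
    have := neg_mem (hx.2 ⟨b, -κ, -u, hb, by rw [map_neg, hκ, smul_neg],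
      by rw [map_neg, hu, neg_neg], rfl⟩)
    rwa [tmul_neg, neg_neg] at this

theorem tmul_mem_of_mem_span {M : Submodule k (k ⊗[ℤ] A)} {T : Set k} {κ : A}
    (h : ∀ b ∈ T, b ⊗ₜ[ℤ] κ ∈ M) {b : k} (hb : b ∈ span k T) : b ⊗ₜ[ℤ] κ ∈ M := by
  have : b ∈ M.comap (LinearMap.toSpanSingleton k _ (1 ⊗ₜ κ)) :=
    span_le.2 (fun b hb => by simpa [smul_tmul'] using h b hb) hb
  simpa [smul_tmul'] using this

end Symbols

section Functor

variable {k : Type*} [CommRing k] {C : Type u} [Category.{v} C] {F K P : C ⥤ AddCommGrpCat.{w}}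
  {i : K ⟶ P} {p : P ⟶ F}

variable (K) in
def baseChangeSpan (X : Set ((c : C) × k ⊗[ℤ] K.obj c)) (c : C) : Submodule k (k ⊗[ℤ] K.obj c) :=
  span k {z | ∃ q ∈ X, ∃ f : q.1 ⟶ c, z = (K.map f).hom.toIntLinearMap.baseChange k q.2}

theorem tmul_eq_baseChange_of_lift {c₀ c : C} (f : c₀ ⟶ c)
    (hinj : Injective (i.app c).hom.toIntLinearMap)
    (hexact : Exact (i.app c).hom.toIntLinearMap (p.app c).hom.toIntLinearMap)
    {g : ℕ} {b : k} (hb : g • b = 0) {κ₀ : K.obj c₀} {u₀ : P.obj c₀}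
    (h₀ : (i.app c₀).hom.toIntLinearMap κ₀ = g • u₀) {κ : K.obj c} {u : P.obj c}
    (hκ : (i.app c).hom.toIntLinearMap κ = g • u)
    (hu : (p.app c).hom.toIntLinearMap u = F.map f ((p.app c₀).hom u₀)) :
    b ⊗ₜ[ℤ] κ = (K.map f).hom.toIntLinearMap.baseChange k (b ⊗ₜ κ₀) := by
  rw [LinearMap.baseChange_tmul]
  refine tmul_eq_tmul_of_lift hinj hexact hb hκ (u' := P.map f u₀) ?_ ?_
  · rw [← map_nsmul, ← h₀]
    exact NatTrans.naturality_apply i f κ₀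
  · rw [hu]
    exact (NatTrans.naturality_apply p f u₀).symm

theorem symbolsOver_subset_baseChangeSpan (hinj : ∀ c, Injective (i.app c).hom.toIntLinearMap)
    (hsurj : ∀ c, Surjective (p.app c).hom.toIntLinearMap)
    (hexact : ∀ c, Exact (i.app c).hom.toIntLinearMap (p.app c).hom.toIntLinearMap)
    {g : ℕ} {T : Set k} (hT : ∀ b, b ∈ span k T ↔ g • b = 0) {s : Set ((c : C) × F.obj c)}
    {κ : ∀ q : (c : C) × F.obj c, K.obj q.1} {u : ∀ q : (c : C) × F.obj c, P.obj q.1}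
    (hκu : ∀ q ∈ s,
      (i.app q.1).hom.toIntLinearMap (κ q) = g • u q ∧ (p.app q.1).hom.toIntLinearMap (u q) = q.2)
    {X : Set ((c : C) × k ⊗[ℤ] K.obj c)} (hX : ∀ q ∈ s, ∀ b ∈ T, ⟨q.1, b ⊗ₜ κ q⟩ ∈ X)
    {c : C} {a : F.obj c} (ha : a ∈ (AddSubfunctor.span F s).obj c) :
    symbolsOver k (i.app c).hom.toIntLinearMap (p.app c).hom.toIntLinearMap g a ⊆
      baseChangeSpan K X c := by
  refine symbolsOver_subset_of_mem_closure (hinj c) (hsurj c) (hexact c) ?_ ha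
  rintro _ ⟨q, hq, f, rfl⟩
  obtain ⟨hκ₀, hu₀⟩ := hκu q hq
  refine ⟨?_, ?_⟩
  · rw [← map_nsmul, ← hu₀, nsmul_apply_eq_zero_of_lift (hexact q.1) hκ₀, map_zero]
  rintro _ ⟨b, κ', u', hb, hκ', hu', rfl⟩
  refine tmul_mem_of_mem_span (fun b' hb' => ?_) ((hT b).2 hb)
  rw [tmul_eq_baseChange_of_lift f (hinj c) (hexact c) ((hT b').1 (subset_span hb')) hκ₀ hκ'
    (hu₀ ▸ hu')]
  exact subset_span ⟨_, hX q hq b' hb', f, rfl⟩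

theorem exists_finite_generators_ker_baseChange [IsNoetherianRing k]
    [WellFoundedGT (AddSubfunctor F)] (hfree : ∀ c, Module.Free ℤ (P.obj c))
    (hinj : ∀ c, Injective (i.app c).hom.toIntLinearMap)
    (hsurj : ∀ c, Surjective (p.app c).hom.toIntLinearMap)
    (hexact : ∀ c, Exact (i.app c).hom.toIntLinearMap (p.app c).hom.toIntLinearMap) :
    ∃ X : Set ((c : C) × k ⊗[ℤ] K.obj c), X.Finite ∧
      (∀ q ∈ X, q.2 ∈ LinearMap.ker ((i.app q.1).hom.toIntLinearMap.baseChange k)) ∧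
      ∀ c, LinearMap.ker ((i.app c).hom.toIntLinearMap.baseChange k) ≤ baseChangeSpan K X c := by
  obtain ⟨N, hN0, hN⟩ := AddSubfunctor.exists_nsmul_eq_zero_of_isOfFinAddOrder (F := F)
  choose s hsfin hs using fun g : ℕ => (AddSubfunctor.torsionBy F g).exists_finite_span_eq
  choose T hT using fun g : ℕ => IsNoetherian.noetherian (Submodule.torsionBy k k (g : k))
  have hT_tors : ∀ g (b : k), b ∈ span k (T g : Set k) ↔ g • b = 0 := fun g b => by
    rw [hT, Submodule.mem_torsionBy_iff, Nat.cast_smul_eq_nsmul]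
  have hs_tors : ∀ g, ∀ q ∈ s g, g • q.2 = 0 := fun g q hq =>
    AddSubgroup.torsionBy.nsmul_iff.1
      (show q.2 ∈ (AddSubfunctor.torsionBy F g).obj q.1 from hs g ▸ AddSubfunctor.mem_span hq)
  choose! κ u hκu using fun g q (hq : q ∈ s g) =>
    exists_lift_of_nsmul_eq_zero (hsurj q.1) (hexact q.1) (hs_tors g q hq)
  let X : Set ((c : C) × k ⊗[ℤ] K.obj c) :=
    ⋃ g ∈ N.divisors, ⋃ q ∈ s g, (fun b => ⟨q.1, b ⊗ₜ κ g q⟩) '' T g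
  have hX : ∀ g ∈ N.divisors, ∀ q ∈ s g, ∀ b ∈ (T g : Set k), ⟨q.1, b ⊗ₜ κ g q⟩ ∈ X :=
    fun g hg q hq b hb => Set.mem_biUnion hg (Set.mem_biUnion hq (Set.mem_image_of_mem _ hb))
  refine ⟨X, N.divisors.finite_toSet.biUnion fun g _ =>
    (hsfin g).biUnion fun q _ => (T g).finite_toSet.image _, ?_, fun c => ?_⟩
  · simp only [X, Set.mem_iUnion, Set.mem_image]
    rintro _ ⟨g, -, q, hq, b, hb, rfl⟩
    exact symbolsOver_subset_ker
      ⟨b, κ g q, u g q, (hT_tors g b).1 (subset_span hb), (hκu g q hq).1, (hκu g q hq).2, rfl⟩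
  refine (ker_baseChange_le_span_symbolsOver (hinj c) (hexact c) (hN c)).trans (span_le.2 ?_)
  rintro z ⟨g, hg, a, hz⟩
  refine symbolsOver_subset_baseChangeSpan hinj hsurj hexact (hT_tors g) (hκu g)
    (hX g (Nat.mem_divisors.2 ⟨hg, hN0.ne'⟩)) ?_ hz
  obtain ⟨-, _, u', -, hκ', rfl, -⟩ := hz
  rw [hs, AddSubfunctor.torsionBy, AddSubgroup.torsionBy.nsmul_iff]
  exact nsmul_apply_eq_zero_of_lift (hexact c) hκ'

end Functor

theorem tor_one_of_noetherian_functor_finitelyGenerated_general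
    (k : Type) [CommRing k] [IsNoetherianRing k]
    (C : Type) [SmallCategory C] [Preadditive C]
    (F K P : C ⥤ AddCommGrpCat.{0}) [F.Additive]
    (i : K ⟶ P) (p : P ⟶ F)
    (hfree : ∀ c : C, Module.Free ℤ (P.obj c))
    (hinj : ∀ c : C, Function.Injective (i.app c).hom)
    (hsurj : ∀ c : C, Function.Surjective (p.app c).hom)
    (hexact : ∀ c : C, AddMonoidHom.ker (p.app c).hom = AddMonoidHom.range (i.app c).hom)
    (hnoeth : WellFoundedGT (Subobject
      (⟨F, ‹F.Additive›⟩ : ObjectProperty.FullSubcategory (fun G : C ⥤ AddCommGrpCat.{0} => G.Additive)))) :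
    ∃ (n : ℕ) (a : Fin n → C) (x : ∀ j : Fin n, k ⊗[ℤ] K.obj (a j)),
      (∀ j : Fin n, x j ∈
        LinearMap.ker (LinearMap.baseChange k (i.app (a j)).hom.toIntLinearMap)) ∧
      ∀ c : C, LinearMap.ker (LinearMap.baseChange k (i.app c).hom.toIntLinearMap) ≤
        Submodule.span k
          {z | ∃ (j : Fin n) (f : a j ⟶ c),
            z = LinearMap.baseChange k (K.map f).hom.toIntLinearMap (x j)} := by
  have := AddSubfunctor.wellFoundedGT_of_subobject hnoeth
  obtain ⟨X, hXfin, hXker, hXspan⟩ := exists_finite_generators_ker_baseChange (k := k)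
    hfree hinj hsurj fun c => AddMonoidHom.exact_iff.2 (hexact c)
  obtain ⟨n, e, rfl⟩ := hXfin.fin_embedding
  refine ⟨n, fun j => (e j).1, fun j => (e j).2, fun j => hXker _ ⟨j, rfl⟩,
    fun c => (hXspan c).trans (span_mono ?_)⟩
  rintro _ ⟨_, ⟨j, rfl⟩, f, rfl⟩
  exact ⟨j, f, rfl⟩

/-- Let `k` be a commutative noetherian ring and `C` a small preadditive category.  Let `F` be
a noetherian object of the category of additive functors `C → Ab` (every ascending chain of
subobjects stabilizes), presented by an exact sequence `0 → K → P → F → 0` of additive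
functors with each `P(c)` a free abelian group.  Then the objectwise functor
`Tor₁^ℤ(F, k) = ker(k ⊗_ℤ K → k ⊗_ℤ P)` is a finitely generated object of the category of
additive functors `C → k-Mod`: it is generated by finitely many elements. -/
theorem tor_one_of_noetherian_functor_finitelyGenerated
    (k : Type) [CommRing k] [IsNoetherianRing k]
    (C : Type) [SmallCategory C] [Preadditive C]
    (F K P : C ⥤ AddCommGrpCat.{0}) [F.Additive] [K.Additive] [P.Additive]
    (i : K ⟶ P) (p : P ⟶ F)
    (hfree : ∀ c : C, Module.Free ℤ (P.obj c))
    (hinj : ∀ c : C, Function.Injective (i.app c).hom)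
    (hsurj : ∀ c : C, Function.Surjective (p.app c).hom)
    (hexact : ∀ c : C, AddMonoidHom.ker (p.app c).hom = AddMonoidHom.range (i.app c).hom)
    (hnoeth : WellFoundedGT (Subobject
      (⟨F, ‹F.Additive›⟩ : ObjectProperty.FullSubcategory (fun G : C ⥤ AddCommGrpCat.{0} => G.Additive)))) :
    ∃ (n : ℕ) (a : Fin n → C) (x : ∀ j : Fin n, k ⊗[ℤ] K.obj (a j)),
      (∀ j : Fin n, x j ∈
        LinearMap.ker (LinearMap.baseChange k (i.app (a j)).hom.toIntLinearMap)) ∧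
      ∀ c : C, LinearMap.ker (LinearMap.baseChange k (i.app c).hom.toIntLinearMap) ≤
        Submodule.span k
          {z | ∃ (j : Fin n) (f : a j ⟶ c),
            z = LinearMap.baseChange k (K.map f).hom.toIntLinearMap (x j)} :=
  tor_one_of_noetherian_functor_finitelyGenerated_general k C F K P i p hfree hinj hsurj hexact
    hnoeth
end

section
/- Let k be a commutative noetherian ring and M an abelian group that is noetherian (finitely generated). Then Tor₁^ℤ(M, k) is a finitely generated k-module. -/
/-!
`Tor₁` does not depend on the projective presentation: comparing `0 → K → F → M → 0` with a
presentation `0 → K₀ → ℤⁿ → M → 0` by lifting the identity of `M` in both directions gives maps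
`u₀ : K₀ → K`, `u : K → K₀` with `u₀ ∘ u` homotopic to the identity, so after tensoring with `k`
the kernel of `k ⊗ K → k ⊗ F` is the image of the kernel of `k ⊗ K₀ → k ⊗ ℤⁿ`. The latter is a
submodule of the finite module `k ⊗ K₀` over the noetherian ring `k`, hence finitely generated.
-/

open LinearMap

section

variable {R K F M N : Type*} [Semiring R] [AddCommMonoid K] [AddCommMonoid F] [AddCommMonoid M]
  [AddCommMonoid N] [Module R K] [Module R F] [Module R M] [Module R N]

theorem Function.Exact.exists_comp_eq_of_comp_eq_zero {i : K →ₗ[R] F} {p : F →ₗ[R] M}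
    (hi : Function.Injective i) (hex : Function.Exact i p) (g : N →ₗ[R] F)
    (hg : p ∘ₗ g = 0) : ∃ g' : N →ₗ[R] K, i ∘ₗ g' = g := by
  have hmem : ∀ x, g x ∈ range i := fun x => by
    rw [← exact_iff.mp hex, mem_ker, ← LinearMap.comp_apply, hg, LinearMap.zero_apply]
  exact ⟨(LinearEquiv.ofInjective i hi).symm.toLinearMap ∘ₗ g.codRestrict (range i) hmem,
    by ext x; simp⟩

end

section

variable {R K K' F F' : Type*} [Semiring R] [AddCommMonoid K] [AddCommMonoid K']
  [AddCommMonoid F] [AddCommMonoid F'] [Module R K] [Module R K'] [Module R F] [Module R F']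

theorem LinearMap.map_ker_eq_ker_of_comp_eq_id_add {i : K →ₗ[R] F} {i' : K' →ₗ[R] F'}
    {u₀ : K' →ₗ[R] K} {u : K →ₗ[R] K'} {s : F' →ₗ[R] F} {s' : F →ₗ[R] F'} {h : F →ₗ[R] K}
    (hu₀ : i ∘ₗ u₀ = s ∘ₗ i') (hu : i' ∘ₗ u = s' ∘ₗ i) (hh : u₀ ∘ₗ u = LinearMap.id + h ∘ₗ i) :
    (ker i').map u₀ = ker i := by
  apply le_antisymm
  · rintro _ ⟨y, hy, rfl⟩
    rw [mem_ker, ← comp_apply, hu₀, comp_apply, mem_ker.mp hy, map_zero]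
  · intro x hx
    refine ⟨u x, ?_, ?_⟩
    · rw [SetLike.mem_coe, mem_ker, ← comp_apply, hu, comp_apply, mem_ker.mp hx, map_zero]
    · rw [← comp_apply, hh, add_apply, comp_apply, mem_ker.mp hx, map_zero, add_zero, id_apply]

end

section

variable {R K K' F F' M : Type*} [CommRing R] [AddCommGroup K] [AddCommGroup K']
  [AddCommGroup F] [AddCommGroup F'] [AddCommGroup M] [Module R K] [Module R K'] [Module R F]
  [Module R F'] [Module R M] [Module.Projective R F] [Module.Projective R F']

theorem exists_map_ker_baseChange_eq (A : Type*) [Semiring A] [Algebra R A]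
    {i : K →ₗ[R] F} {p : F →ₗ[R] M} (hi : Function.Injective i) (hp : Function.Surjective p)
    (hex : Function.Exact i p) {i' : K' →ₗ[R] F'} {p' : F' →ₗ[R] M}
    (hi' : Function.Injective i') (hp' : Function.Surjective p') (hex' : Function.Exact i' p') :
    ∃ u₀ : K' →ₗ[R] K, (ker (i'.baseChange A)).map (u₀.baseChange A) = ker (i.baseChange A) := by
  obtain ⟨s, hs⟩ := Module.projective_lifting_property p p' hp
  obtain ⟨s', hs'⟩ := Module.projective_lifting_property p' p hp'
  obtain ⟨u₀, hu₀⟩ := hex.exists_comp_eq_of_comp_eq_zero hi (s ∘ₗ i') <| by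
    rw [← comp_assoc, hs, hex'.linearMap_comp_eq_zero]
  obtain ⟨u, hu⟩ := hex'.exists_comp_eq_of_comp_eq_zero hi' (s' ∘ₗ i) <| by
    rw [← comp_assoc, hs', hex.linearMap_comp_eq_zero]
  obtain ⟨h, hh⟩ := hex.exists_comp_eq_of_comp_eq_zero hi (s ∘ₗ s' - LinearMap.id) <| by
    rw [comp_sub, ← comp_assoc, hs, hs', comp_id, sub_self]
  have hhtpy : u₀ ∘ₗ u = LinearMap.id + h ∘ₗ i := by
    apply hi.injective_linearMapComp_left
    change i ∘ₗ (u₀ ∘ₗ u) = i ∘ₗ (LinearMap.id + h ∘ₗ i)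
    rw [← comp_assoc, hu₀, comp_assoc, hu, comp_add, ← comp_assoc i h i, hh, sub_comp, comp_id,
      id_comp, ← comp_assoc, add_sub_cancel]
  refine ⟨u₀, map_ker_eq_ker_of_comp_eq_id_add (u := u.baseChange A) (s := s.baseChange A)
    (s' := s'.baseChange A) (h := h.baseChange A) ?_ ?_ ?_⟩
  · rw [← baseChange_comp, hu₀, baseChange_comp]
  · rw [← baseChange_comp, hu, baseChange_comp]
  · rw [← baseChange_comp, hhtpy, baseChange_add, baseChange_id, baseChange_comp]

end

/-- Let `k` be a commutative noetherian ring and `M` a finitely generated (noetherian)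
abelian group.  Then `Tor₁^ℤ(M, k)` is a finitely generated `k`-module.  Here `Tor₁^ℤ(M, k)`
is computed from any free presentation `0 → K → F → M → 0` of the abelian group `M` as the
kernel of `k ⊗_ℤ K → k ⊗_ℤ F`. -/
theorem tor_one_finite (k : Type*) [CommRing k] [IsNoetherianRing k]
    (M K F : Type*) [AddCommGroup M] [Module ℤ M] [AddCommGroup K] [Module ℤ K]
    [AddCommGroup F] [Module ℤ F]
    (hM : Module.Finite ℤ M) (hF : Module.Free ℤ F)
    (i : K →ₗ[ℤ] F) (p : F →ₗ[ℤ] M)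
    (hi : Function.Injective i) (hp : Function.Surjective p)
    (hex : LinearMap.ker p = LinearMap.range i) :
    Module.Finite k (LinearMap.ker (LinearMap.baseChange k i)) := by
  obtain ⟨n, π, hπ⟩ := Module.Finite.exists_fin' ℤ M
  obtain ⟨u₀, hu₀⟩ := exists_map_ker_baseChange_eq k hi hp (exact_iff.mpr hex)
    (ker π).injective_subtype hπ (exact_subtype_ker_map π)
  rw [Module.Finite.iff_fg, ← hu₀]
  exact (IsNoetherian.noetherian _).map _
end

section
/- For any k-module V and d ∈ ℕ, the k-linear map ⊕ k[V^r] → Γ^d_k(V), with the sum over tuples (i₁,…,i_r) of positive integers with i₁+⋯+i_r = d, sending [v₁,…,v_r] to v₁^[i₁]⋯v_r^[i_r], is surjective. -/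
open MvPolynomial

theorem dp_zero (k : Type*) {V : Type*} [CommRing k] [AddCommGroup V] [Module k V] (v : V) :
    dp k v 0 = 1 :=
  sub_eq_zero.mp <| (Ideal.Quotient.eq_zero_iff_mem).mpr <|
    Ideal.subset_span (Or.inl (Or.inl (Or.inl ⟨v, rfl⟩)))

@[to_additive]
theorem Finset.prod_equivFin_filter {M ι : Type*} [CommMonoid M] [Fintype ι] (p : ι → Prop)
    [DecidablePred p] (h : ι → M) (hp : ∀ a, ¬p a → h a = 1) :
    ∏ i : Fin (univ.filter p).card, h ((univ.filter p).equivFin.symm i) = ∏ a, h a := by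
  rw [Fintype.prod_equiv (univ.filter p).equivFin.symm _ (fun a => h a) fun _ => rfl,
    Finset.prod_coe_sort, Finset.prod_filter_of_ne fun a _ ha => not_not.mp (mt (hp a) ha)]

theorem exists_pos_tuple_prod_eq {M V : Type*} [CommMonoid M] (F : V → ℕ → M)
    (hF : ∀ v, F v 0 = 1) {r : ℕ} (f : Fin r → V) (g : Fin r → ℕ) :
    ∃ (r' : ℕ) (f' : Fin r' → V) (g' : Fin r' → ℕ), (∀ a, 0 < g' a) ∧
      ∑ a, g' a = ∑ a, g a ∧ ∏ a, F (f' a) (g' a) = ∏ a, F (f a) (g a) := by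
  classical
  let e := (Finset.univ.filter fun a => 0 < g a).equivFin.symm
  have hzero : ∀ a, ¬0 < g a → g a = 0 := fun a => Nat.eq_zero_of_not_pos
  refine ⟨_, fun i => f (e i), fun i => g (e i), fun i => (Finset.mem_filter.mp (e i).2).2,
    Finset.sum_equivFin_filter _ g hzero,
    Finset.prod_equivFin_filter _ (fun a => F (f a) (g a)) fun a ha => ?_⟩
  rw [hzero a ha, hF]

/-- For any `k`-module `V` and `d ∈ ℕ`, the map `⊕ k[V^r] → Γ^d_k(V)` (sum over tuples
`(i₁,…,i_r)` of **positive** integers with `i₁+⋯+i_r = d`) sending `[v₁,…,v_r]` to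
`v₁^[i₁]⋯v_r^[i_r]` is surjective: `Γ^d_k(V)` is spanned by such products. -/
theorem gammaDP_spanned_by_positive_products
    (k V : Type*) [CommRing k] [AddCommGroup V] [Module k V] (d : ℕ) :
    Submodule.span k {x : DividedPowerAlg k V |
        ∃ (r : ℕ) (f : Fin r → V) (g : Fin r → ℕ),
          (∀ a, 0 < g a) ∧ (∑ a, g a) = d ∧ x = ∏ a, dp k (f a) (g a)} =
      gammaDP k V d := by
  refine le_antisymm (Submodule.span_mono ?_) (Submodule.span_le.mpr ?_)
  · rintro x ⟨r, f, g, -, hsum, rfl⟩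
    exact ⟨r, f, g, hsum, rfl⟩
  · rintro x ⟨r, f, g, rfl, rfl⟩
    obtain ⟨r', f', g', hpos, hsum, hprod⟩ := exists_pos_tuple_prod_eq (dp k) (dp_zero k) f g
    exact Submodule.subset_span ⟨r', f', g', hpos, hsum, hprod.symm⟩
end
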